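/- arXiv:1003.0349 — 7 statements merged into one kernel-verified Lean document; each statement's English description precedes it below -/
import Mathlib

section
/- For every weakly controlled Moran construction {X_i : i ∈ I*} there exist constants c > 0 and 0 < ϱ < 1 such that diam(X_i) ≤ c·ϱ^{|i|} for every i ∈ I*. -/
open Metric Set Filter MeasureTheory Topology
open scoped ENNReal ENat

namespace Moran

/-- Composition of the maps of an IFS along a finite word:
`comp φ (i₁, …, iₙ) = φ i₁ ∘ ⋯ ∘ φ iₙ`. -/
def comp {ι M : Type*} (φ : ι → M → M) : List ι → M → M
  | [] => id
  | a :: l => φ a ∘ comp φ l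

/-- The initial segment (of length `n`) of an infinite word. -/
def pre {ι : Type*} (j : ℕ → ι) (n : ℕ) : List ι := List.ofFn fun k : Fin n => j k

/-- The cylinder set of a finite word, as a subset of the symbol space `I^∞`. -/
def cylinder {ι : Type*} (i : List ι) : Set (ℕ → ι) := {j | pre j i.length = i}

/-- Two finite words are incomparable if neither is an initial segment of the other. -/
def Incomp {ι : Type*} (i j : List ι) : Prop := ¬ i <+: j ∧ ¬ j <+: i

/-- A metric space is doubling if there is `κ` such that every ball of radius `2r`
can be covered by `κ` balls of radius `r`. -/
def DoublingSpace (M : Type*) [MetricSpace M] : Prop :=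
  ∃ κ : ℕ, ∀ (x : M) (r : ℝ), ∃ s : Finset M,
    s.card ≤ κ ∧ ball x (2 * r) ⊆ ⋃ y ∈ s, ball y r

/-- A weakly controlled Moran construction (WCMC) over the index set `ι`
in the metric space `M`. The sets are indexed by nonempty finite words,
modelled as nonempty lists; `i.dropLast` plays the role of `i⁻`. -/
structure WCMC (ι M : Type*) [Fintype ι] [MetricSpace M] where
  X : List ι → Set M
  compact : ∀ i : List ι, i ≠ [] → IsCompact (X i)
  diam_pos : ∀ i : List ι, i ≠ [] → 0 < diam (X i)
  D : ℝ
  one_le_D : 1 ≤ D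
  nested : ∀ i : List ι, 2 ≤ i.length → X i ⊆ X i.dropLast
  small : ∃ n : ℕ, 1 ≤ n ∧ ∀ i : List ι, i.length = n → diam (X i) < D⁻¹
  submult : ∀ i j : List ι, i ≠ [] → j ≠ [] →
    diam (X (i ++ j)) ≤ D * diam (X i) * diam (X j)
  lower : ∀ i : List ι, 2 ≤ i.length → D⁻¹ * diam (X i.dropLast) ≤ diam (X i)

/-- A controlled Moran construction (CMC). -/
structure CMC (ι M : Type*) [Fintype ι] [MetricSpace M] where
  X : List ι → Set M
  compact : ∀ i : List ι, i ≠ [] → IsCompact (X i)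
  diam_pos : ∀ i : List ι, i ≠ [] → 0 < diam (X i)
  D : ℝ
  one_le_D : 1 ≤ D
  nested : ∀ i : List ι, 2 ≤ i.length → X i ⊆ X i.dropLast
  small : ∃ n : ℕ, 1 ≤ n ∧ ∀ i : List ι, i.length = n → diam (X i) < D⁻¹
  controlled_le : ∀ i j : List ι, i ≠ [] → j ≠ [] →
    diam (X (i ++ j)) ≤ D * (diam (X i) * diam (X j))
  controlled_ge : ∀ i j : List ι, i ≠ [] → j ≠ [] →
    D⁻¹ * (diam (X i) * diam (X j)) ≤ diam (X (i ++ j))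

/-- The limit set `E = π(I^∞)` of a Moran construction. -/
def limitSet {ι M : Type*} [MetricSpace M] (X : List ι → Set M) : Set M :=
  {x | ∃ j : ℕ → ι, ∀ n : ℕ, 1 ≤ n → x ∈ X (pre j n)}

/-- `Z(r)`: the words whose construction piece has diameter at most `r` while the
parent piece has diameter greater than `r` (first-generation words with diameter
at most `r` are included). -/
def Zr {ι M : Type*} [MetricSpace M] (X : List ι → Set M) (r : ℝ) : Set (List ι) :=
  {i | i ≠ [] ∧ diam (X i) ≤ r ∧ (i.length = 1 ∨ r < diam (X i.dropLast))}

/-- `Z(x,r)`: the words of `Z(r)` whose construction piece meets `B(x,r)`. -/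
def Zx {ι M : Type*} [MetricSpace M] (X : List ι → Set M) (x : M) (r : ℝ) :
    Set (List ι) :=
  {i | i ∈ Zr X r ∧ (X i ∩ ball x r).Nonempty}

/-- The finite clustering property: `sup_{x ∈ E} limsup_{r ↓ 0} #Z(x,r) < ∞`. -/
def FCP {ι M : Type*} [MetricSpace M] (X : List ι → Set M) : Prop :=
  ∃ K : ℕ, ∀ x ∈ limitSet X,
    Filter.limsup (fun r : ℝ => (Zx X x r).encard) (𝓝[>] 0) ≤ (K : ℕ∞)

/-- The ball condition. -/
def BallCond {ι M : Type*} [MetricSpace M] (X : List ι → Set M) : Prop :=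
  ∃ δ : ℝ, 0 < δ ∧ δ < 1 ∧ ∀ x ∈ limitSet X, ∃ rx > 0, ∀ r : ℝ, 0 < r → r < rx →
    ∃ c : List ι → M, (∀ i ∈ Zx X x r, infDist (c i) (X i) < r) ∧
      (Zx X x r).Pairwise fun i j => Disjoint (ball (c i) (δ * r)) (ball (c j) (δ * r))

/-- Distance between two subsets of a metric space. -/
noncomputable def setDist {M : Type*} [MetricSpace M] (s t : Set M) : ℝ :=
  ENNReal.toReal (⨅ x ∈ s, EMetric.infEdist x t)

/-- Tractability of a Moran construction. -/
def Tractable {ι M : Type*} [MetricSpace M] (X : List ι → Set M) : Prop :=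
  ∃ C : ℝ, 1 ≤ C ∧ ∀ r : ℝ, 0 < r → ∀ h i j : List ι, h ≠ [] →
    i ∈ Zr X r → j ∈ Zr X r → setDist (X i) (X j) ≤ r →
      setDist (X (h ++ i)) (X (h ++ j)) ≤ C * diam (X h) * r

/-- The `n`-th pressure sum `Σ_{i ∈ I^n} diam(X_i)^t`. -/
noncomputable def presSum {ι M : Type*} [Fintype ι] [MetricSpace M]
    (X : List ι → Set M) (t : ℝ) (n : ℕ) : ℝ :=
  ∑ i : Fin n → ι, diam (X (List.ofFn i)) ^ t

/-- `P` is the topological pressure of the construction `X`: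
`P(t) = lim_{n → ∞} (1/n) log Σ_{i ∈ I^n} diam(X_i)^t` for every `t ≥ 0`. -/
def IsPressure {ι M : Type*} [Fintype ι] [MetricSpace M]
    (X : List ι → Set M) (P : ℝ → ℝ) : Prop :=
  ∀ t : ℝ, 0 ≤ t →
    Tendsto (fun n : ℕ => (1 / (n : ℝ)) * Real.log (presSum X t n)) atTop (𝓝 (P t))

/-- The covering number `N(E,r)`: the minimal number of open balls of radius `r`
needed to cover `E`. -/
noncomputable def coverNum {M : Type*} [MetricSpace M] (E : Set M) (r : ℝ) : ℕ :=
  sInf {k : ℕ | ∃ s : Finset M, s.card = k ∧ E ⊆ ⋃ y ∈ s, ball y r}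

/-- The upper Minkowski dimension `limsup_{r ↓ 0} log N(E,r) / (−log r)`. -/
noncomputable def upMink {M : Type*} [MetricSpace M] (E : Set M) : EReal :=
  Filter.limsup
    (fun r : ℝ => ((Real.log (coverNum E r) / (-Real.log r) : ℝ) : EReal)) (𝓝[>] 0)

/-- The `n`-th stage `M^ψ_n(A)` of the Carathéodory construction on the symbol
space: the infimum of `Σ_{i ∈ C} ψ(i)` over covers of `A` by cylinders of words of
length at least `n`. -/
noncomputable def Mpsin {ι : Type*} (ψ : List ι → ℝ) (n : ℕ) (A : Set (ℕ → ι)) :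
    ℝ≥0∞ :=
  ⨅ (C : Set (List ι)) (_ : ∀ i ∈ C, i ≠ [] ∧ n ≤ i.length)
    (_ : A ⊆ ⋃ i ∈ C, cylinder i), ∑' i : C, ENNReal.ofReal (ψ i)

/-- `M^ψ(A) = lim_{n → ∞} M^ψ_n(A)`; since the stages are nondecreasing in `n`,
the limit equals the supremum. -/
noncomputable def Mpsi {ι : Type*} (ψ : List ι → ℝ) (A : Set (ℕ → ι)) : ℝ≥0∞ :=
  ⨆ n : ℕ, Mpsin ψ n A

/-- A semiconformal iterated function system on `M`: finitely many contractive
injections `φ i` whose invariant set `E` has positive diameter, together with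
semiconformality bounds `s̲_i, s̄_i` (comparable via `D`) for the iterated maps. -/
structure SCIFS (ι M : Type*) [Fintype ι] [MetricSpace M] where
  φ : ι → M → M
  contr : ∀ i : ι, ∃ s : ℝ, 0 ≤ s ∧ s < 1 ∧ ∀ x y : M, dist (φ i x) (φ i y) ≤ s * dist x y
  inj : ∀ i : ι, Function.Injective (φ i)
  E : Set M
  E_compact : IsCompact E
  E_nonempty : E.Nonempty
  E_invariant : E = ⋃ i : ι, φ i '' E
  diamE_pos : 0 < diam E
  slo : List ι → ℝ
  shi : List ι → ℝ
  D : ℝ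
  one_le_D : 1 ≤ D
  slo_pos : ∀ i : List ι, i ≠ [] → 0 < slo i
  slo_le_shi : ∀ i : List ι, i ≠ [] → slo i ≤ shi i
  shi_lt_one : ∀ i : List ι, i ≠ [] → shi i < 1
  shi_le_D_slo : ∀ i : List ι, i ≠ [] → shi i ≤ D * slo i
  lower : ∀ i : List ι, i ≠ [] → ∀ x y : M,
    slo i * dist x y ≤ dist (comp φ i x) (comp φ i y)
  upper : ∀ i : List ι, i ≠ [] → ∀ x y : M,
    dist (comp φ i x) (comp φ i y) ≤ shi i * dist x y

/-- The Moran construction pieces `E_i = φ_i(E)` associated with an IFS. -/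
def SCIFS.Xs {ι M : Type*} [Fintype ι] [MetricSpace M] (S : SCIFS ι M) :
    List ι → Set M := fun i => comp S.φ i '' S.E

/-- The open set condition. -/
def OSC {ι M : Type*} [Fintype ι] [MetricSpace M] (S : SCIFS ι M) : Prop :=
  ∃ U : Set M, IsOpen U ∧ U.Nonempty ∧ ∀ i j : List ι, i ≠ [] → j ≠ [] →
    Incomp i j → Disjoint (comp S.φ i '' U) (comp S.φ j '' U)

/-- The strong open set condition. -/
def SOSC {ι M : Type*} [Fintype ι] [MetricSpace M] (S : SCIFS ι M) : Prop :=
  ∃ U : Set M, IsOpen U ∧ U.Nonempty ∧ (U ∩ S.E).Nonempty ∧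
    ∀ i j : List ι, i ≠ [] → j ≠ [] →
      Incomp i j → Disjoint (comp S.φ i '' U) (comp S.φ j '' U)

/-- An essential open set for an IFS: a dense open set meeting the invariant set. -/
def EssentialOpen {ι M : Type*} [Fintype ι] [MetricSpace M] (S : SCIFS ι M)
    (W : Set M) : Prop :=
  IsOpen W ∧ Dense W ∧ (W ∩ S.E).Nonempty

/-- A properly semiconformal IFS. -/
def ProperlySC {ι M : Type*} [Fintype ι] [MetricSpace M] (S : SCIFS ι M) : Prop :=
  ∃ W : Set M, EssentialOpen S W ∧ W ≠ univ ∧ ∀ x ∈ W, ∃ lam : ℝ, 1 ≤ lam ∧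
    ∀ i : List ι, i ≠ [] →
      infDist (comp S.φ i x) (comp S.φ i '' Wᶜ) ≤
        lam * infDist (comp S.φ i x) ((comp S.φ i '' W)ᶜ)

end Moran

/-! Splitting off the first `n` letters and using submultiplicativity turns the bound
`D · diam X_i ≤ θ < 1` on words of length `n` into `D · diam X_i ≤ θ ^ q` on words of length at
least `q n`; since the diameters decrease along prefixes, the remaining letters only cost a
constant factor. -/

theorem exists_lt_forall_le_of_finite {α β : Type*} [Finite α]
    [ConditionallyCompleteLinearOrder β] [NoMinOrder β] {f : α → β} {b : β}
    (hf : ∀ x, f x < b) : ∃ θ < b, ∀ x, f x ≤ θ := by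
  obtain ⟨a, hab⟩ := exists_lt b
  have hfin : (insert a (range f)).Finite := (finite_range f).insert a
  refine ⟨sSup (insert a (range f)), ?_,
    fun x => le_csSup hfin.bddAbove (mem_insert_of_mem a (mem_range_self x))⟩
  rw [hfin.csSup_lt_iff (insert_nonempty a _)]
  rintro y (rfl | ⟨x, rfl⟩)
  exacts [hab, hf x]

theorem pow_div_le_rpow_inv_pow_div {θ : ℝ} (hθ0 : 0 < θ) (hθ1 : θ ≤ 1) {n : ℕ} (hn : n ≠ 0)
    (m : ℕ) : θ ^ (m / n) ≤ (θ ^ (n⁻¹ : ℝ)) ^ m / θ := by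
  set ϱ := θ ^ (n⁻¹ : ℝ)
  have hϱn : ϱ ^ n = θ := Real.rpow_inv_natCast_pow hθ0.le hn
  rw [le_div_iff₀ hθ0]
  calc θ ^ (m / n) * θ = ϱ ^ (n * (m / n + 1)) := by rw [pow_mul, hϱn, pow_succ]
    _ ≤ ϱ ^ m := pow_le_pow_of_le_one (by positivity) (Real.rpow_le_one hθ0.le hθ1 (by positivity))
        (Nat.lt_mul_div_succ m (Nat.pos_of_ne_zero hn)).le

section SubmultiplicativeDecay

variable {ι : Type*} {g : List ι → ℝ}

theorem le_pow_of_mul_le_length (hg0 : ∀ i, 0 ≤ g i)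
    (hmul : ∀ i j, i ≠ [] → j ≠ [] → g (i ++ j) ≤ g i * g j)
    (hanti : ∀ i j, i ≠ [] → g (i ++ j) ≤ g i) {n : ℕ} (hn : 1 ≤ n) {θ : ℝ}
    (hθ : ∀ i : List ι, i.length = n → g i ≤ θ) {q : ℕ} (hq : 1 ≤ q) :
    ∀ i : List ι, q * n ≤ i.length → g i ≤ θ ^ q := by
  induction q, hq using Nat.le_induction with
  | base =>
    intro i hi
    have hhead : (i.take n).length = n := List.length_take_of_le (by omega)
    rw [pow_one, ← List.take_append_drop n i]
    exact (hanti _ _ (List.ne_nil_of_length_pos (by omega))).trans (hθ _ hhead)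
  | succ q hq ih =>
    intro i hi
    rw [add_one_mul] at hi
    have hhead : (i.take n).length = n := List.length_take_of_le (by omega)
    have htail : q * n ≤ (i.drop n).length := by rw [List.length_drop]; omega
    have hθ0 : 0 ≤ θ := (hg0 _).trans (hθ _ hhead)
    rw [← List.take_append_drop n i, pow_succ']
    calc g (i.take n ++ i.drop n) ≤ g (i.take n) * g (i.drop n) :=
          hmul _ _ (List.ne_nil_of_length_pos (by omega))
            (List.ne_nil_of_length_pos ((Nat.mul_pos hq hn).trans_le htail))
      _ ≤ θ * θ ^ q := mul_le_mul (hθ _ hhead) (ih _ htail) (hg0 _) hθ0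

theorem exists_le_mul_pow_length_of_submultiplicative (hg0 : ∀ i, 0 ≤ g i)
    (hmul : ∀ i j, i ≠ [] → j ≠ [] → g (i ++ j) ≤ g i * g j)
    (hanti : ∀ i j, i ≠ [] → g (i ++ j) ≤ g i)
    (hsmall : ∃ n, 1 ≤ n ∧ ∃ θ < 1, ∀ i : List ι, i.length = n → g i ≤ θ)
    (hbdd : ∃ C, ∀ i, i ≠ [] → g i ≤ C) :
    ∃ c : ℝ, 0 < c ∧ ∃ ϱ : ℝ, 0 < ϱ ∧ ϱ < 1 ∧ ∀ i, i ≠ [] → g i ≤ c * ϱ ^ i.length := by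
  obtain ⟨n, hn, θ, hθ1, hθ⟩ := hsmall
  obtain ⟨C, hC⟩ := hbdd
  -- `θ` itself may be `0` or negative, which `θ ^ (1 / n)` cannot handle.
  set θ' := max θ 2⁻¹
  have hθ'0 : 0 < θ' := lt_max_of_lt_right (by norm_num)
  have hθ'1 : θ' < 1 := max_lt hθ1 (by norm_num)
  refine ⟨max C 1 / θ', by positivity, θ' ^ (n⁻¹ : ℝ), by positivity,
    Real.rpow_lt_one hθ'0.le hθ'1 (by positivity), fun i hi => ?_⟩
  have hblock : g i ≤ max C 1 * θ' ^ (i.length / n) := by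
    rcases Nat.eq_zero_or_pos (i.length / n) with hq | hq
    · rw [hq, pow_zero, mul_one]
      exact (hC i hi).trans (le_max_left _ _)
    · calc g i ≤ θ' ^ (i.length / n) :=
            le_pow_of_mul_le_length hg0 hmul hanti hn (fun j hj => (hθ j hj).trans (le_max_left _ _))
              hq i (Nat.div_mul_le_self _ _)
        _ ≤ max C 1 * θ' ^ (i.length / n) := le_mul_of_one_le_left (by positivity) (le_max_right _ _)
  calc g i ≤ max C 1 * θ' ^ (i.length / n) := hblock
    _ ≤ max C 1 * ((θ' ^ (n⁻¹ : ℝ)) ^ i.length / θ') :=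
        mul_le_mul_of_nonneg_left (pow_div_le_rpow_inv_pow_div hθ'0 hθ'1.le (by omega) _)
          (by positivity)
    _ = max C 1 / θ' * (θ' ^ (n⁻¹ : ℝ)) ^ i.length := by ring

end SubmultiplicativeDecay

namespace Moran.WCMC

variable {ι M : Type*} [Fintype ι] [MetricSpace M] (W : WCMC ι M)

theorem diam_append_le (i j : List ι) (hi : i ≠ []) : diam (W.X (i ++ j)) ≤ diam (W.X i) := by
  induction j using List.reverseRecOn with
  | nil => simp
  | append_singleton j a ih =>
    have hparent : (i ++ (j ++ [a])).dropLast = i ++ j := by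
      rw [← List.append_assoc, List.dropLast_concat]
    have hlen : 2 ≤ (i ++ (j ++ [a])).length := by
      simp only [List.length_append, List.length_singleton]
      have := List.length_pos_iff.mpr hi
      omega
    have hsub : W.X (i ++ (j ++ [a])) ⊆ W.X (i ++ j) := hparent ▸ W.nested _ hlen
    exact (diam_mono hsub (W.compact _ (by simp [hi])).isBounded).trans ih

theorem exists_forall_diam_le : ∃ C, ∀ i : List ι, i ≠ [] → diam (W.X i) ≤ C := by
  obtain ⟨C, hC⟩ := Finite.exists_le fun a : ι => diam (W.X [a])
  refine ⟨C, fun i hi => ?_⟩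
  rw [← List.cons_head_tail hi]
  exact (W.diam_append_le [i.head hi] i.tail (List.cons_ne_nil _ _)).trans (hC _)

theorem exists_forall_length_eq_D_mul_diam_le :
    ∃ n, 1 ≤ n ∧ ∃ θ < 1, ∀ i : List ι, i.length = n → W.D * diam (W.X i) ≤ θ := by
  obtain ⟨n, hn, hsmall⟩ := W.small
  have hD0 : 0 < W.D := zero_lt_one.trans_le W.one_le_D
  obtain ⟨θ, hθ1, hθ⟩ := exists_lt_forall_le_of_finite (f := fun v : List.Vector ι n =>
      W.D * diam (W.X v.toList)) (b := 1)
    fun v => by simpa [hD0.ne'] using mul_lt_mul_of_pos_left (hsmall _ v.toList_length) hD0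
  exact ⟨n, hn, θ, hθ1, fun i hi => hθ ⟨i, hi⟩⟩

end Moran.WCMC

theorem stmt0_general {ι M : Type*} [Fintype ι] [MetricSpace M]
    (W : Moran.WCMC ι M) :
    ∃ c : ℝ, 0 < c ∧ ∃ ϱ : ℝ, 0 < ϱ ∧ ϱ < 1 ∧
      ∀ i : List ι, i ≠ [] → Metric.diam (W.X i) ≤ c * ϱ ^ i.length := by
  have hD0 : 0 < W.D := zero_lt_one.trans_le W.one_le_D
  obtain ⟨C, hC⟩ := W.exists_forall_diam_le
  obtain ⟨c, hc, ϱ, hϱ0, hϱ1, hdecay⟩ :=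
    exists_le_mul_pow_length_of_submultiplicative (g := fun i => W.D * diam (W.X i))
      (fun i => mul_nonneg hD0.le diam_nonneg)
      (fun i j hi hj =>
        (mul_le_mul_of_nonneg_left (W.submult i j hi hj) hD0.le).trans_eq (by ring))
      (fun i j hi => mul_le_mul_of_nonneg_left (W.diam_append_le i j hi) hD0.le)
      W.exists_forall_length_eq_D_mul_diam_le
      ⟨W.D * C, fun i hi => mul_le_mul_of_nonneg_left (hC i hi) hD0.le⟩
  refine ⟨c / W.D, div_pos hc hD0, ϱ, hϱ0, hϱ1, fun i hi => ?_⟩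
  rw [div_mul_eq_mul_div, le_div_iff₀ hD0, mul_comm]
  exact hdecay i hi

/-- For every weakly controlled Moran construction there exist
constants `c > 0` and `0 < ϱ < 1` with `diam(X_i) ≤ c·ϱ^{|i|}` for every `i ∈ I*`. -/
theorem stmt0 {ι M : Type*} [Fintype ι] [MetricSpace M]
    (hcard : 2 ≤ Fintype.card ι) (W : Moran.WCMC ι M) :
    ∃ c : ℝ, 0 < c ∧ ∃ ϱ : ℝ, 0 < ϱ ∧ ϱ < 1 ∧
      ∀ i : List ι, i ≠ [] → Metric.diam (W.X i) ≤ c * ϱ ^ i.length :=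
  stmt0_general W
end

section
/- For a weakly controlled Moran construction, for every t ≥ 0 the limit P(t) = lim_{n→∞} (1/n)·log Σ_{i∈I^n} diam(X_i)^t exists and is finite, the function P : [0,∞) → ℝ is convex and satisfies P(t) ≥ P(0) − t·log D for all t ≥ 0 (where D is the WCMC constant), and there exists t ≥ 0 such that P(t) = 0. -/
open Metric Set Filter MeasureTheory Topology
open scoped ENNReal ENat

/-!
By (W3) the sums `S_n(t) = ∑_{|i| = n} diam(X_i)^t` satisfy
`D^t S_{m+n}(t) ≤ D^t S_m(t) · D^t S_n(t)`, so `log (D^t S_n(t))` is subadditive and Fekete's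
lemma gives the limit `P(t)`. By (W4) every `diam(X_i)` is at least `c D^{-|i|}`, which keeps the
limit finite and yields `P(t) ≥ log #I - t log D = P(0) - t log D`. Each `t ↦ log S_n(t)` is convex
by Hölder's inequality, hence so is `P`. By (W2) some generation has `D diam(X_i) < 1` for all its
pieces, so `D^t S_n(t) < 1` for large `t` and `P(t) ≤ log (D^t S_n(t)) / n < 0`. Since
`P(0) = log #I > 0` and the convex function `P` is continuous on `[0, ∞)` (at `0` it is squeezed
between the lower bound and a chord), `P` has a zero.
-/

theorem exists_tendsto_div_of_add_le {v : ℕ → ℝ}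
    (hsub : ∀ m n, m ≠ 0 → n ≠ 0 → v (m + n) ≤ v m + v n) {a b : ℝ}
    (hlow : ∀ n, n ≠ 0 → a * n + b ≤ v n) :
    ∃ L, Tendsto (fun n => v n / n) atTop (𝓝 L) ∧ ∀ n, n ≠ 0 → L ≤ v n / n := by
  -- `Subadditive` also constrains the value at `0`, which `v` leaves free.
  set u : ℕ → ℝ := fun n => if n = 0 then 0 else v n with hu
  have hu_eq : ∀ n, n ≠ 0 → u n = v n := fun n hn => if_neg hn
  have hsubadd : Subadditive u := by
    intro m n
    rcases eq_or_ne m 0 with rfl | hm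
    · simp [hu]
    rcases eq_or_ne n 0 with rfl | hn
    · simp [hu]
    rw [hu_eq _ (by omega), hu_eq m hm, hu_eq n hn]
    exact hsub m n hm hn
  have hbdd : BddBelow (range fun n => u n / n) := by
    refine ⟨min 0 (a - |b|), ?_⟩
    rintro _ ⟨n, rfl⟩
    rcases eq_or_ne n 0 with rfl | hn
    · simp [hu]
    have hn1 : (1 : ℝ) ≤ n := by exact_mod_cast Nat.one_le_iff_ne_zero.mpr hn
    show min 0 (a - |b|) ≤ u n / n
    rw [hu_eq n hn, le_div_iff₀ (by positivity)]
    nlinarith [min_le_right 0 (a - |b|), min_le_left 0 (a - |b|), hlow n hn, neg_abs_le b,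
      abs_nonneg b]
  refine ⟨hsubadd.lim, (hsubadd.tendsto_lim hbdd).congr' ?_, fun n hn => ?_⟩
  · filter_upwards [eventually_ne_atTop 0] with n hn
    rw [hu_eq n hn]
  · simpa [hu_eq n hn] using hsubadd.lim_le_div hbdd hn

theorem convexOn_of_tendsto {E : Type*} [AddCommMonoid E] [Module ℝ E] {s : Set E}
    {ι : Type*} {l : Filter ι} [l.NeBot] {f : ι → E → ℝ} {g : E → ℝ} (hs : Convex ℝ s)
    (hf : ∀ᶠ n in l, ConvexOn ℝ s (f n)) (hlim : ∀ x ∈ s, Tendsto (fun n => f n x) l (𝓝 (g x))) :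
    ConvexOn ℝ s g := by
  refine ⟨hs, fun x hx y hy a b ha hb hab => ?_⟩
  refine le_of_tendsto_of_tendsto (hlim _ (hs hx hy ha hb hab))
    (((hlim x hx).const_smul a).add ((hlim y hy).const_smul b)) ?_
  filter_upwards [hf] with n hn
  exact hn.2 hx hy ha hb hab

theorem ConvexOn.continuousWithinAt_Ici_of_sub_mul_le {f : ℝ → ℝ} {L : ℝ}
    (hf : ConvexOn ℝ (Ici 0) f) (hlow : ∀ t, 0 ≤ t → f 0 - t * L ≤ f t) :
    ContinuousWithinAt f (Ici 0) 0 := by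
  have hupper : ∀ t ∈ Icc (0 : ℝ) 1, f t ≤ f 0 + t * (f 1 - f 0) := by
    rintro t ⟨ht0, ht1⟩
    have h := hf.2 (x := 0) (y := 1) self_mem_Ici (by norm_num) (sub_nonneg.mpr ht1) ht0
      (by ring)
    simp only [smul_eq_mul, mul_zero, mul_one, zero_add] at h
    linarith
  have hlim : ∀ c : ℝ, Tendsto (fun t => f 0 + t * c) (𝓝[Ici 0] 0) (𝓝 (f 0)) := fun c => by
    have hc : Continuous fun t : ℝ => f 0 + t * c := by fun_prop
    exact tendsto_nhdsWithin_of_tendsto_nhds (by simpa using hc.tendsto 0)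
  refine tendsto_of_tendsto_of_tendsto_of_le_of_le' (hlim (-L)) (hlim (f 1 - f 0)) ?_ ?_
  · filter_upwards [self_mem_nhdsWithin] with t ht
    linarith [hlow t ht]
  · filter_upwards [inter_mem_nhdsWithin (Ici 0) (Iio_mem_nhds one_pos)] with t ht
    exact hupper t ⟨ht.1, ht.2.le⟩

theorem Finset.sum_rpow_mul_rpow_le {α : Type*} {s : Finset α} {f g : α → ℝ}
    (hf : ∀ i ∈ s, 0 < f i) (hg : ∀ i ∈ s, 0 < g i) (hs : s.Nonempty) {a b : ℝ}
    (ha : 0 ≤ a) (hb : 0 ≤ b) (hab : a + b = 1) :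
    ∑ i ∈ s, f i ^ a * g i ^ b ≤ (∑ i ∈ s, f i) ^ a * (∑ i ∈ s, g i) ^ b := by
  set A := ∑ i ∈ s, f i
  set B := ∑ i ∈ s, g i
  have hA : 0 < A := Finset.sum_pos hf hs
  have hB : 0 < B := Finset.sum_pos hg hs
  -- weighted AM-GM applied to the normalized terms `f i / A` and `g i / B`
  have hterm : ∀ i ∈ s, f i ^ a * g i ^ b ≤ A ^ a * B ^ b * (a * (f i / A) + b * (g i / B)) := by
    intro i hi
    have hamgm := Real.geom_mean_le_arith_mean2_weighted ha hb
      (div_nonneg (hf i hi).le hA.le) (div_nonneg (hg i hi).le hB.le) hab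
    rw [Real.div_rpow (hf i hi).le hA.le, Real.div_rpow (hg i hi).le hB.le] at hamgm
    have hAB : 0 < A ^ a * B ^ b := by positivity
    calc f i ^ a * g i ^ b = A ^ a * B ^ b * (f i ^ a / A ^ a * (g i ^ b / B ^ b)) := by
          field_simp
      _ ≤ _ := mul_le_mul_of_nonneg_left hamgm hAB.le
  calc ∑ i ∈ s, f i ^ a * g i ^ b
      ≤ ∑ i ∈ s, A ^ a * B ^ b * (a * (f i / A) + b * (g i / B)) := Finset.sum_le_sum hterm
    _ = A ^ a * B ^ b * (a * (A / A) + b * (B / B)) := by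
      rw [← Finset.mul_sum, Finset.sum_add_distrib, ← Finset.mul_sum, ← Finset.mul_sum,
        ← Finset.sum_div, ← Finset.sum_div]
    _ = A ^ a * B ^ b := by rw [div_self hA.ne', div_self hB.ne', mul_one, mul_one, hab, mul_one]

theorem convexOn_log_sum_rpow {α : Type*} {s : Finset α} {d : α → ℝ} (hd : ∀ i ∈ s, 0 < d i)
    (hs : s.Nonempty) : ConvexOn ℝ univ fun t : ℝ => Real.log (∑ i ∈ s, d i ^ t) := by
  refine ⟨convex_univ, fun x _ y _ a b ha hb hab => ?_⟩
  have hpos : ∀ t : ℝ, 0 < ∑ i ∈ s, d i ^ t := fun t =>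
    Finset.sum_pos (fun i hi => Real.rpow_pos_of_pos (hd i hi) t) hs
  have hsplit : ∀ i ∈ s, d i ^ (a • x + b • y) = (d i ^ x) ^ a * (d i ^ y) ^ b := by
    intro i hi
    rw [smul_eq_mul, smul_eq_mul, Real.rpow_add (hd i hi), ← Real.rpow_mul (hd i hi).le,
      ← Real.rpow_mul (hd i hi).le, mul_comm a, mul_comm b]
  have hholder := Finset.sum_rpow_mul_rpow_le (fun i hi => Real.rpow_pos_of_pos (hd i hi) x)
    (fun i hi => Real.rpow_pos_of_pos (hd i hi) y) hs ha hb hab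
  rw [← Finset.sum_congr rfl hsplit] at hholder
  calc Real.log (∑ i ∈ s, d i ^ (a • x + b • y))
      ≤ Real.log ((∑ i ∈ s, d i ^ x) ^ a * (∑ i ∈ s, d i ^ y) ^ b) :=
        Real.log_le_log (hpos _) hholder
    _ = a • Real.log (∑ i ∈ s, d i ^ x) + b • Real.log (∑ i ∈ s, d i ^ y) := by
        rw [Real.log_mul (Real.rpow_pos_of_pos (hpos x) a).ne'
          (Real.rpow_pos_of_pos (hpos y) b).ne', Real.log_rpow (hpos x), Real.log_rpow (hpos y),
          smul_eq_mul, smul_eq_mul]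

theorem List.ofFn_ne_nil {α : Type*} {n : ℕ} (hn : n ≠ 0) (f : Fin n → α) : List.ofFn f ≠ [] := by
  simpa using hn

namespace Moran

variable {ι M : Type*} [Fintype ι] [MetricSpace M]

theorem presSum_zero_exponent (X : List ι → Set M) (n : ℕ) :
    presSum X 0 n = (Fintype.card ι : ℝ) ^ n := by
  simp [presSum]

noncomputable def pressure (X : List ι → Set M) (t : ℝ) : ℝ :=
  limUnder atTop fun n : ℕ => 1 / (n : ℝ) * Real.log (presSum X t n)

theorem pressure_zero_exponent (X : List ι → Set M) :
    pressure X 0 = Real.log (Fintype.card ι) := by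
  refine Tendsto.limUnder_eq (tendsto_const_nhds.congr' ?_)
  filter_upwards [eventually_ne_atTop 0] with n hn
  rw [presSum_zero_exponent, Real.log_pow]
  field_simp

namespace WCMC

variable (W : WCMC ι M)

theorem D_pos : 0 < W.D := one_pos.trans_le W.one_le_D

theorem exists_mul_inv_pow_le_diam [Nonempty ι] :
    ∃ c > 0, ∀ i : List ι, i ≠ [] → c * W.D⁻¹ ^ i.length ≤ diam (W.X i) := by
  obtain ⟨a₀, ha₀⟩ := Finite.exists_min fun a : ι => diam (W.X [a])
  have hc : 0 < diam (W.X [a₀]) := W.diam_pos _ (List.cons_ne_nil _ _)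
  have hDinv : W.D⁻¹ ≤ 1 := inv_le_one_of_one_le₀ W.one_le_D
  refine ⟨_, hc, fun i => ?_⟩
  induction i using List.reverseRecOn with
  | nil => exact fun h => absurd rfl h
  | append_singleton l a ih =>
    intro _
    rcases eq_or_ne l [] with rfl | hl
    · simpa using (mul_le_of_le_one_right hc.le hDinv).trans (ha₀ a)
    have hlen : 2 ≤ (l ++ [a]).length := by
      simp [Nat.one_le_iff_ne_zero.mpr (mt List.length_eq_zero_iff.mp hl)]
    have hlower := W.lower _ hlen
    rw [List.dropLast_concat] at hlower
    calc diam (W.X [a₀]) * W.D⁻¹ ^ (l ++ [a]).length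
        = W.D⁻¹ * (diam (W.X [a₀]) * W.D⁻¹ ^ l.length) := by simp [pow_succ]; ring
      _ ≤ W.D⁻¹ * diam (W.X l) := mul_le_mul_of_nonneg_left (ih hl) (inv_nonneg.mpr W.D_pos.le)
      _ ≤ diam (W.X (l ++ [a])) := hlower

theorem presSum_pos [Nonempty ι] (t : ℝ) {n : ℕ} (hn : n ≠ 0) : 0 < presSum W.X t n :=
  Finset.sum_pos (fun i _ => Real.rpow_pos_of_pos (W.diam_pos _ (List.ofFn_ne_nil hn i)) t)
    Finset.univ_nonempty

theorem rpow_mul_presSum (t : ℝ) (n : ℕ) :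
    W.D ^ t * presSum W.X t n = ∑ i : Fin n → ι, (W.D * diam (W.X (List.ofFn i))) ^ t := by
  rw [presSum, Finset.mul_sum]
  exact Finset.sum_congr rfl fun i _ => (Real.mul_rpow W.D_pos.le diam_nonneg).symm

theorem rpow_mul_presSum_add_le {t : ℝ} (ht : 0 ≤ t) {m n : ℕ} (hm : m ≠ 0) (hn : n ≠ 0) :
    W.D ^ t * presSum W.X t (m + n) ≤
      (W.D ^ t * presSum W.X t m) * (W.D ^ t * presSum W.X t n) := by
  have hD := W.D_pos
  rw [rpow_mul_presSum, rpow_mul_presSum, rpow_mul_presSum, Finset.sum_mul_sum,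
    ← Fintype.sum_prod_type', ← (Fin.appendEquiv m n).sum_comp]
  refine Finset.sum_le_sum fun p _ => ?_
  rw [← Real.mul_rpow (by positivity) (by positivity)]
  refine Real.rpow_le_rpow (by positivity) ?_ ht
  have h := W.submult _ _ (List.ofFn_ne_nil hm p.1) (List.ofFn_ne_nil hn p.2)
  simp only [Fin.appendEquiv, Equiv.coe_fn_mk, List.ofFn_fin_append]
  nlinarith

theorem exists_log_presSum_ge [Nonempty ι] {t : ℝ} (ht : 0 ≤ t) : ∃ b : ℝ, ∀ n : ℕ, n ≠ 0 →
    (Real.log (Fintype.card ι) - t * Real.log W.D) * n + b ≤ Real.log (presSum W.X t n) := by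
  obtain ⟨c, hc, hdiam⟩ := W.exists_mul_inv_pow_le_diam
  refine ⟨t * Real.log c, fun n hn => ?_⟩
  have hcn : 0 < c * W.D⁻¹ ^ n := by have := W.D_pos; positivity
  have hsum : (Fintype.card ι : ℝ) ^ n * (c * W.D⁻¹ ^ n) ^ t ≤ presSum W.X t n := by
    have h := Finset.card_nsmul_le_sum Finset.univ
      (fun i : Fin n → ι => diam (W.X (List.ofFn i)) ^ t) ((c * W.D⁻¹ ^ n) ^ t)
      fun i _ => Real.rpow_le_rpow hcn.le (by simpa using hdiam _ (List.ofFn_ne_nil hn i)) ht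
    simpa [presSum, nsmul_eq_mul] using h
  have hlog := Real.log_le_log (by positivity) hsum
  rw [Real.log_mul (by positivity) (by positivity), Real.log_pow, Real.log_rpow hcn,
    Real.log_mul hc.ne' (by have := W.D_pos; positivity), Real.log_pow, Real.log_inv] at hlog
  linarith

theorem exists_rpow_mul_presSum_lt_one :
    ∃ n : ℕ, n ≠ 0 ∧ ∃ t : ℝ, 0 ≤ t ∧ W.D ^ t * presSum W.X t n < 1 := by
  obtain ⟨n, hn, hsmall⟩ := W.small
  have hlt : ∀ i : Fin n → ι, W.D * diam (W.X (List.ofFn i)) < 1 := fun i => by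
    have h := hsmall _ (List.length_ofFn (f := i))
    simpa [W.D_pos.ne'] using mul_lt_mul_of_pos_left h W.D_pos
  have hlim : Tendsto (fun t => W.D ^ t * presSum W.X t n) atTop (𝓝 0) := by
    simp_rw [rpow_mul_presSum]
    simpa using tendsto_finsetSum Finset.univ fun i _ =>
      tendsto_rpow_atTop_of_base_lt_one _
        (neg_one_lt_zero.trans_le (mul_nonneg W.D_pos.le diam_nonneg)) (hlt i)
  obtain ⟨t, ht, hlt1⟩ :=
    ((eventually_ge_atTop 0).and (hlim.eventually (gt_mem_nhds one_pos))).exists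
  exact ⟨n, by omega, t, ht, hlt1⟩

theorem convexOn_log_presSum [Nonempty ι] {n : ℕ} (hn : n ≠ 0) :
    ConvexOn ℝ univ fun t => Real.log (presSum W.X t n) :=
  convexOn_log_sum_rpow (fun i _ => W.diam_pos _ (List.ofFn_ne_nil hn i)) Finset.univ_nonempty

theorem exists_tendsto_log_presSum [Nonempty ι] {t : ℝ} (ht : 0 ≤ t) :
    ∃ L, Tendsto (fun n : ℕ => 1 / (n : ℝ) * Real.log (presSum W.X t n)) atTop (𝓝 L) ∧
      ∀ n : ℕ, n ≠ 0 → L ≤ Real.log (W.D ^ t * presSum W.X t n) / n := by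
  have hDt : 0 < W.D ^ t := Real.rpow_pos_of_pos W.D_pos t
  have hlog : ∀ n : ℕ, n ≠ 0 →
      Real.log (W.D ^ t * presSum W.X t n) = t * Real.log W.D + Real.log (presSum W.X t n) :=
    fun n hn => by rw [Real.log_mul hDt.ne' (W.presSum_pos t hn).ne', Real.log_rpow W.D_pos]
  have hsub : ∀ m n : ℕ, m ≠ 0 → n ≠ 0 → Real.log (W.D ^ t * presSum W.X t (m + n)) ≤
      Real.log (W.D ^ t * presSum W.X t m) + Real.log (W.D ^ t * presSum W.X t n) := by
    intro m n hm hn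
    rw [← Real.log_mul (mul_pos hDt (W.presSum_pos t hm)).ne'
      (mul_pos hDt (W.presSum_pos t hn)).ne']
    exact Real.log_le_log (mul_pos hDt (W.presSum_pos t (by omega)))
      (W.rpow_mul_presSum_add_le ht hm hn)
  obtain ⟨b, hb⟩ := W.exists_log_presSum_ge ht
  obtain ⟨L, hL, hLle⟩ := exists_tendsto_div_of_add_le
    (v := fun n => Real.log (W.D ^ t * presSum W.X t n)) hsub
    (a := Real.log (Fintype.card ι) - t * Real.log W.D) (b := t * Real.log W.D + b)
    fun n hn => by rw [hlog n hn]; linarith [hb n hn]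
  refine ⟨L, ?_, hLle⟩
  simpa using (hL.sub (tendsto_const_div_atTop_nhds_zero_nat (t * Real.log W.D))).congr' <| by
    filter_upwards [eventually_ne_atTop 0] with n hn
    rw [hlog n hn]
    field_simp
    ring

theorem tendsto_pressure [Nonempty ι] {t : ℝ} (ht : 0 ≤ t) :
    Tendsto (fun n : ℕ => 1 / (n : ℝ) * Real.log (presSum W.X t n)) atTop
      (𝓝 (pressure W.X t)) := by
  obtain ⟨L, hL, -⟩ := W.exists_tendsto_log_presSum ht
  rwa [pressure, hL.limUnder_eq]

theorem pressure_le_log_rpow_mul_presSum_div [Nonempty ι] {t : ℝ} (ht : 0 ≤ t) {n : ℕ}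
    (hn : n ≠ 0) : pressure W.X t ≤ Real.log (W.D ^ t * presSum W.X t n) / n := by
  obtain ⟨L, hL, hLle⟩ := W.exists_tendsto_log_presSum ht
  rw [pressure, hL.limUnder_eq]
  exact hLle n hn

theorem log_card_sub_mul_le_pressure [Nonempty ι] {t : ℝ} (ht : 0 ≤ t) :
    Real.log (Fintype.card ι) - t * Real.log W.D ≤ pressure W.X t := by
  obtain ⟨b, hb⟩ := W.exists_log_presSum_ge ht
  have hlim : Tendsto (fun n : ℕ => Real.log (Fintype.card ι) - t * Real.log W.D + b / n) atTop
      (𝓝 (Real.log (Fintype.card ι) - t * Real.log W.D)) := by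
    simpa using tendsto_const_nhds.add (tendsto_const_div_atTop_nhds_zero_nat b)
  refine le_of_tendsto_of_tendsto hlim (W.tendsto_pressure ht) ?_
  filter_upwards [eventually_ne_atTop 0] with n hn
  have hn' : (0 : ℝ) < n := by positivity
  rw [one_div_mul_eq_div, le_div_iff₀ hn', add_mul, div_mul_cancel₀ _ hn'.ne']
  exact hb n hn

theorem convexOn_pressure [Nonempty ι] : ConvexOn ℝ (Ici 0) (pressure W.X) := by
  refine convexOn_of_tendsto (convex_Ici 0) ?_ fun t ht => W.tendsto_pressure ht
  filter_upwards [eventually_ne_atTop 0] with n hn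
  exact ((W.convexOn_log_presSum hn).subset (subset_univ _) (convex_Ici 0)).smul (by positivity)

theorem exists_pressure_neg [Nonempty ι] : ∃ t : ℝ, 0 ≤ t ∧ pressure W.X t < 0 := by
  obtain ⟨n, hn, t, ht, hlt⟩ := W.exists_rpow_mul_presSum_lt_one
  refine ⟨t, ht, (W.pressure_le_log_rpow_mul_presSum_div ht hn).trans_lt ?_⟩
  have hpos : 0 < W.D ^ t * presSum W.X t n :=
    mul_pos (Real.rpow_pos_of_pos W.D_pos t) (W.presSum_pos t hn)
  exact div_neg_of_neg_of_pos (Real.log_neg hpos hlt) (by positivity)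

theorem exists_pressure_eq_zero (hcard : 2 ≤ Fintype.card ι) :
    ∃ t : ℝ, 0 ≤ t ∧ pressure W.X t = 0 := by
  have : Nonempty ι := Fintype.card_pos_iff.mp (by omega)
  have hlower : ∀ t, 0 ≤ t → pressure W.X 0 - t * Real.log W.D ≤ pressure W.X t := fun t ht => by
    simpa [pressure_zero_exponent] using W.log_card_sub_mul_le_pressure ht
  have hcont : ContinuousOn (pressure W.X) (Ici 0) := W.convexOn_pressure.continuousOn_Ici
    (W.convexOn_pressure.continuousWithinAt_Ici_of_sub_mul_le hlower)
  have hP0 : 0 < pressure W.X 0 := by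
    rw [pressure_zero_exponent]
    exact Real.log_pos (by exact_mod_cast hcard)
  obtain ⟨t₁, ht₁, hneg⟩ := W.exists_pressure_neg
  exact isPreconnected_Ici.intermediate_value ht₁ self_mem_Ici hcont ⟨hneg.le, hP0.le⟩

end WCMC

end Moran

/-- For a WCMC the topological pressure
`P(t) = lim_{n→∞} (1/n) log Σ_{i∈I^n} diam(X_i)^t` exists (and is finite) for every
`t ≥ 0`, is convex on `[0,∞)`, satisfies `P(t) ≥ P(0) − t log D`, and has a zero
`t ≥ 0`. -/
theorem stmt1 {ι M : Type*} [Fintype ι] [MetricSpace M]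
    (hcard : 2 ≤ Fintype.card ι) (W : Moran.WCMC ι M) :
    ∃ P : ℝ → ℝ, Moran.IsPressure W.X P ∧ ConvexOn ℝ (Set.Ici 0) P ∧
      (∀ t : ℝ, 0 ≤ t → P 0 - t * Real.log W.D ≤ P t) ∧
      ∃ t : ℝ, 0 ≤ t ∧ P t = 0 := by
  have : Nonempty ι := Fintype.card_pos_iff.mp (by omega)
  refine ⟨Moran.pressure W.X, fun t ht => W.tendsto_pressure ht, W.convexOn_pressure,
    fun t ht => ?_, W.exists_pressure_eq_zero hcard⟩
  rw [Moran.pressure_zero_exponent]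
  exact W.log_card_sub_mul_le_pressure ht
end

section
/- For a weakly controlled Moran construction the topological pressure is strictly decreasing: if 0 ≤ s < t then P(t) < P(s). -/
open Metric Set Filter MeasureTheory Topology
open scoped ENNReal ENat

/-!
Choose `n` with `max_{|i| = n} diam X_i < D⁻¹` and let `ρ` be the largest of the numbers
`D · diam X_i`, `|i| = n`, so that `ρ < 1`. Since `i ↦ D · diam X_i` is submultiplicative,
`diam X_i ≤ ρ^k` for every word of length `kn`; hence each term of the pressure sum at
exponent `t` is at most `ρ^{k(t-s)}` times the corresponding term at exponent `s`. Taking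
`(1/kn) log` and letting `k → ∞` gives `P(t) ≤ P(s) + (t - s) log ρ / n < P(s)`.
-/

namespace Moran

variable {ι M : Type*}

theorem le_pow_of_submultiplicative (g : List ι → ℝ) (hg : ∀ i, 0 ≤ g i)
    (hmul : ∀ i j, i ≠ [] → j ≠ [] → g (i ++ j) ≤ g i * g j) {n : ℕ} (hn : 0 < n)
    {ρ : ℝ} (hρ : ∀ i : List ι, i.length = n → g i ≤ ρ) :
    ∀ k, 1 ≤ k → ∀ i : List ι, i.length = k * n → g i ≤ ρ ^ k := by
  intro k hk
  induction k, hk using Nat.le_induction with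
  | base => simpa using hρ
  | succ k hk ih =>
    intro i hi
    have htake : (i.take n).length = n := by simp [hi]; nlinarith
    have hdrop : (i.drop n).length = k * n := by simp [hi]; ring_nf; omega
    calc g i = g (i.take n ++ i.drop n) := by rw [List.take_append_drop]
      _ ≤ g (i.take n) * g (i.drop n) :=
        hmul _ _ (List.ne_nil_of_length_pos (by omega))
          (List.ne_nil_of_length_pos (by rw [hdrop]; positivity))
      _ ≤ ρ * ρ ^ k := mul_le_mul (hρ _ htake) (ih _ hdrop) (hg _) ((hg _).trans (hρ _ htake))
      _ = ρ ^ (k + 1) := by ring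

theorem WCMC.exists_mul_diam_le_lt_one [Fintype ι] [Nonempty ι] [MetricSpace M]
    (W : WCMC ι M) : ∃ n, 0 < n ∧ ∃ ρ, 0 < ρ ∧ ρ < 1 ∧
      ∀ i : List ι, i.length = n → W.D * diam (W.X i) ≤ ρ := by
  obtain ⟨n, hn, hsmall⟩ := W.small
  have hD : 0 < W.D := one_pos.trans_le W.one_le_D
  obtain ⟨f, -, hf⟩ := (Finset.univ : Finset (Fin n → ι)).exists_max_image
    (fun f => W.D * diam (W.X (List.ofFn f))) Finset.univ_nonempty
  refine ⟨n, hn, W.D * diam (W.X (List.ofFn f)), mul_pos hD (W.diam_pos _ ?_), ?_,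
    fun i hi => ?_⟩
  · exact List.ne_nil_of_length_pos (by simp; omega)
  · simpa [hD.ne'] using mul_lt_mul_of_pos_left (hsmall _ (List.length_ofFn)) hD
  · have hi' : List.ofFn (fun k : Fin n => i.get (k.cast hi.symm)) = i :=
      (List.ofFn_congr hi i.get).symm.trans (List.ofFn_get i)
    rw [← hi']
    exact hf _ (Finset.mem_univ _)

theorem WCMC.exists_diam_le_pow [Fintype ι] [Nonempty ι] [MetricSpace M]
    (W : WCMC ι M) : ∃ n, 0 < n ∧ ∃ ρ, 0 < ρ ∧ ρ < 1 ∧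
      ∀ k, 1 ≤ k → ∀ i : List ι, i.length = k * n → diam (W.X i) ≤ ρ ^ k := by
  obtain ⟨n, hn, ρ, hρ0, hρ1, hρ⟩ := W.exists_mul_diam_le_lt_one
  have hD : 0 ≤ W.D := zero_le_one.trans W.one_le_D
  refine ⟨n, hn, ρ, hρ0, hρ1, fun k hk i hi => ?_⟩
  calc diam (W.X i) ≤ W.D * diam (W.X i) := le_mul_of_one_le_left diam_nonneg W.one_le_D
    _ ≤ ρ ^ k := le_pow_of_submultiplicative (fun i => W.D * diam (W.X i))
        (fun _ => mul_nonneg hD diam_nonneg)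
        (fun i j hi hj => by
          calc W.D * diam (W.X (i ++ j)) ≤ W.D * (W.D * diam (W.X i) * diam (W.X j)) :=
                mul_le_mul_of_nonneg_left (W.submult i j hi hj) hD
            _ = W.D * diam (W.X i) * (W.D * diam (W.X j)) := by ring)
        hn hρ k hk i hi

variable [Fintype ι] [MetricSpace M] {X : List ι → Set M}

theorem presSum_pos [Nonempty ι] (hX : ∀ i, i ≠ [] → 0 < diam (X i)) (t : ℝ) {m : ℕ}
    (hm : 0 < m) : 0 < presSum X t m :=
  Finset.sum_pos (fun i _ => Real.rpow_pos_of_pos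
    (hX _ (List.ne_nil_of_length_pos (by simpa using hm))) t) Finset.univ_nonempty

theorem log_presSum_le [Nonempty ι] (hX : ∀ i, i ≠ [] → 0 < diam (X i)) {s t r : ℝ}
    (hst : s ≤ t) {m : ℕ} (hm : 0 < m)
    (hr : ∀ i : List ι, i.length = m → diam (X i) ≤ r) :
    Real.log (presSum X t m) ≤ (t - s) * Real.log r + Real.log (presSum X s m) := by
  have hpos : ∀ i : Fin m → ι, 0 < diam (X (List.ofFn i)) :=
    fun i => hX _ (List.ne_nil_of_length_pos (by simpa using hm))
  have hr0 : 0 < r := by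
    obtain ⟨i⟩ : Nonempty (Fin m → ι) := inferInstance
    exact (hpos i).trans_le (hr _ List.length_ofFn)
  have hsum : presSum X t m ≤ r ^ (t - s) * presSum X s m := by
    rw [presSum, presSum, Finset.mul_sum]
    refine Finset.sum_le_sum fun i _ => ?_
    calc diam (X (List.ofFn i)) ^ t
        = diam (X (List.ofFn i)) ^ (t - s) * diam (X (List.ofFn i)) ^ s := by
          rw [← Real.rpow_add (hpos i), sub_add_cancel]
      _ ≤ r ^ (t - s) * diam (X (List.ofFn i)) ^ s := by
          gcongr
          exact hr _ List.length_ofFn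
  calc Real.log (presSum X t m) ≤ Real.log (r ^ (t - s) * presSum X s m) :=
        Real.log_le_log (presSum_pos hX t hm) hsum
    _ = (t - s) * Real.log r + Real.log (presSum X s m) := by
        rw [Real.log_mul (Real.rpow_pos_of_pos hr0 _).ne' (presSum_pos hX s hm).ne',
          Real.log_rpow hr0]

end Moran

theorem le_add_div_of_le_on_multiples {u v : ℕ → ℝ} {A B δ : ℝ} {n : ℕ} (hn : 0 < n)
    (hu : Tendsto (fun m : ℕ => 1 / (m : ℝ) * u m) atTop (𝓝 A))
    (hv : Tendsto (fun m : ℕ => 1 / (m : ℝ) * v m) atTop (𝓝 B))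
    (h : ∀ k, 1 ≤ k → u (k * n) ≤ v (k * n) + k * δ) : A ≤ B + δ / n := by
  have hmul : Tendsto (fun k : ℕ => k * n) atTop atTop :=
    tendsto_id.atTop_mul_const' hn
  refine le_of_tendsto_of_tendsto (hu.comp hmul)
    ((hv.comp hmul).add_const (δ / n)) ?_
  filter_upwards [eventually_ge_atTop 1] with k hk
  have hkn : (0 : ℝ) < k * n := by positivity
  simp only [Function.comp_apply, Nat.cast_mul]
  calc 1 / (k * n : ℝ) * u (k * n) ≤ 1 / (k * n) * (v (k * n) + k * δ) := by
        gcongr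
        exact h k hk
    _ = 1 / (k * n) * v (k * n) + δ / n := by
        field_simp

/-- For a WCMC the topological pressure is strictly decreasing:
if `0 ≤ s < t` then `P(t) < P(s)`. -/
theorem stmt2 {ι M : Type*} [Fintype ι] [MetricSpace M]
    (hcard : 2 ≤ Fintype.card ι) (W : Moran.WCMC ι M)
    (P : ℝ → ℝ) (hP : Moran.IsPressure W.X P) :
    ∀ s t : ℝ, 0 ≤ s → s < t → P t < P s := by
  intro s t hs hst
  have : Nonempty ι := Fintype.card_pos_iff.mp (by omega)
  obtain ⟨n, hn, ρ, hρ0, hρ1, hdiam⟩ := W.exists_diam_le_pow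
  have hle : P t ≤ P s + (t - s) * Real.log ρ / n :=
    le_add_div_of_le_on_multiples hn (hP t (hs.trans hst.le)) (hP s hs) fun k hk => by
      calc Real.log (Moran.presSum W.X t (k * n))
          ≤ (t - s) * Real.log (ρ ^ k) + Real.log (Moran.presSum W.X s (k * n)) :=
            Moran.log_presSum_le W.diam_pos hst.le (by positivity) (hdiam k hk)
        _ = _ := by rw [Real.log_pow]; ring
  have hneg : (t - s) * Real.log ρ / n < 0 :=
    div_neg_of_neg_of_pos (mul_neg_of_pos_of_neg (sub_pos.2 hst) (Real.log_neg hρ0 hρ1))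
      (by positivity)
  linarith
end

section
/- If the topological pressure of a weakly controlled Moran construction satisfies P(t) ≤ 0 for a given t ≥ 0, then the upper Minkowski dimension of the limit set E satisfies dim_M(E) ≤ t. -/
open Metric Set Filter MeasureTheory Topology
open scoped ENNReal ENat

/-!
Cover the limit set at scale `r` by one ball around a point of each piece `X_i`, `i ∈ Z(r/2)`.
Since `D · diam X` is submultiplicative and below `1` on some generation `n₀`, diameters decay
exponentially along words, so the words of `Z(r/2)` have length `O(log (1/r))`. For small `r` they
all have a parent, so by (W4) `diam X_i ≥ r / (2D)`, and the words of `Z(r/2)` of length `n` number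
at most `(2D/r)^t Σ_{i ∈ I^n} diam(X_i)^t`. As `P(t) ≤ 0`, these pressure sums grow subexponentially
in `n`, and summing over `n = O(log (1/r))` gives `N(E, r) ≤ C r^{-s}` for every `s > t`.
-/

namespace Moran

variable {M : Type*} [MetricSpace M]

theorem coverNum_le_card {α : Type*} {E : Set M} {r : ℝ} (F : Finset α) (U : α → Set M)
    (hU : ∀ i ∈ F, ∃ y, U i ⊆ ball y r) (hE : E ⊆ ⋃ i ∈ F, U i) :
    coverNum E r ≤ F.card := by
  classical
  choose y hy using hU
  have hcover : E ⊆ ⋃ z ∈ F.attach.image fun i => y i.1 i.2, ball z r := by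
    intro x hx
    obtain ⟨i, hi, hxi⟩ := mem_iUnion₂.1 (hE hx)
    exact mem_iUnion₂.2
      ⟨y i hi, Finset.mem_image_of_mem _ (Finset.mem_attach _ ⟨i, hi⟩), hy i hi hxi⟩
  calc coverNum E r ≤ (F.attach.image fun i => y i.1 i.2).card := Nat.sInf_le ⟨_, rfl, hcover⟩
    _ ≤ F.card := Finset.card_image_le.trans F.card_attach.le

theorem upMink_le_of_coverNum_le_rpow {E : Set M} {t : ℝ} (ht : 0 ≤ t)
    (h : ∀ s > t, ∃ C, ∀ᶠ r in 𝓝[>] 0, (coverNum E r : ℝ) ≤ C * r ^ (-s)) :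
    upMink E ≤ t := by
  refine EReal.le_of_forall_lt_iff_le.1 fun y hty => limsup_le_of_le (by isBoundedDefault) ?_
  have hty : t < y := EReal.coe_lt_coe_iff.1 hty
  obtain ⟨C, hC⟩ := h ((t + y) / 2) (by linarith)
  have hu : Tendsto (fun r : ℝ => -Real.log r) (𝓝[>] 0) atTop :=
    tendsto_neg_atBot_atTop.comp Real.tendsto_log_nhdsGT_zero
  filter_upwards [hC, self_mem_nhdsWithin,
    hu.eventually (eventually_ge_atTop (max 1 (2 * Real.log C / (y - t))))] with r hNr hr hur
  have hu0 : 0 < -Real.log r := lt_of_lt_of_le one_pos ((le_max_left _ _).trans hur)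
  refine EReal.coe_le_coe_iff.2 ((div_le_iff₀ hu0).2 ?_)
  rcases (Nat.zero_le (coverNum E r)).eq_or_lt with hN | hN
  · rw [← hN, Nat.cast_zero, Real.log_zero]
    exact mul_nonneg (by linarith) hu0.le
  · have hlogN : Real.log (coverNum E r) ≤ Real.log C + (t + y) / 2 * -Real.log r := by
      have hC0 : 0 < C * r ^ (-((t + y) / 2)) := (Nat.cast_pos.2 hN).trans_le hNr
      have hC0' : 0 < C := pos_of_mul_pos_left hC0 (Real.rpow_nonneg hr.out.le _)
      calc Real.log (coverNum E r) ≤ Real.log (C * r ^ (-((t + y) / 2))) :=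
            Real.log_le_log (Nat.cast_pos.2 hN) hNr
        _ = Real.log C + (t + y) / 2 * -Real.log r := by
            rw [Real.log_mul hC0'.ne' (Real.rpow_pos_of_pos hr.out _).ne',
              Real.log_rpow hr.out]
            ring
    have : 2 * Real.log C ≤ (y - t) * -Real.log r :=
      (div_le_iff₀' (by linarith)).1 ((le_max_right _ _).trans hur)
    linarith

theorem exists_sum_range_le_mul_exp {s : ℕ → ℝ} {p ε : ℝ}
    (hs : Tendsto (fun n : ℕ => (1 / (n : ℝ)) * Real.log (s n)) atTop (𝓝 p)) (hpε : p < ε)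
    (hε : 0 < ε) : ∃ A, ∀ L, ∑ n ∈ Finset.range L, s n ≤ A * Real.exp (ε * L) := by
  have hbig : s =O[atTop] fun n : ℕ => Real.exp (ε * n) := by
    refine Asymptotics.IsBigO.of_bound 1 ?_
    filter_upwards [hs.eventually (eventually_lt_nhds hpε), eventually_gt_atTop 0] with n hn hn0
    have hn0 : (0 : ℝ) < n := Nat.cast_pos.2 hn0
    rcases eq_or_ne (s n) 0 with h0 | h0
    · simp [h0, (Real.exp_pos _).le]
    have hlog : Real.log |s n| < ε * n := by
      rw [Real.log_abs]
      rw [one_div, ← div_eq_inv_mul, div_lt_iff₀ hn0] at hn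
      linarith
    rw [Real.norm_eq_abs, Real.norm_eq_abs, abs_of_pos (Real.exp_pos _), one_mul]
    exact ((Real.log_lt_iff_lt_exp (abs_pos.2 h0)).1 hlog).le
  obtain ⟨C, hC, hbound⟩ := Asymptotics.bound_of_isBigO_nat_atTop hbig
  have hq : 1 < Real.exp ε := Real.one_lt_exp_iff.2 hε
  refine ⟨C / (Real.exp ε - 1), fun L => ?_⟩
  calc ∑ n ∈ Finset.range L, s n ≤ ∑ n ∈ Finset.range L, C * Real.exp ε ^ n := by
        refine Finset.sum_le_sum fun n _ => ?_
        have := hbound (Real.exp_pos (ε * n)).ne'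
        rw [Real.norm_eq_abs, Real.norm_eq_abs, abs_of_pos (Real.exp_pos _), mul_comm ε,
          Real.exp_nat_mul] at this
        exact (le_abs_self _).trans this
    _ = C * ((Real.exp ε ^ L - 1) / (Real.exp ε - 1)) := by
        rw [← Finset.mul_sum, geom_sum_eq hq.ne']
    _ ≤ C / (Real.exp ε - 1) * Real.exp (ε * L) := by
        rw [mul_comm ε, Real.exp_nat_mul, mul_div_assoc', div_mul_eq_mul_div]
        gcongr
        linarith

theorem card_mul_rpow_le_presSum {ι : Type*} [Fintype ι] {X : List ι → Set M}
    {Z : Finset (List ι)} {n : ℕ} {c t : ℝ} (hc : 0 ≤ c) (ht : 0 ≤ t)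
    (hZ : ∀ i ∈ Z, i.length = n ∧ c ≤ diam (X i)) :
    (Z.card : ℝ) * c ^ t ≤ presSum X t n := by
  classical
  have hsub : Z ⊆ Finset.univ.image (List.ofFn : (Fin n → ι) → List ι) := by
    intro i hi
    have hlen := (hZ i hi).1
    exact Finset.mem_image.2 ⟨fun k => i.get ⟨k, by simp [hlen]⟩, Finset.mem_univ _,
      List.ext_get (by simp [hlen]) (by simp)⟩
  calc (Z.card : ℝ) * c ^ t = ∑ i ∈ Z, c ^ t := by rw [Finset.sum_const, nsmul_eq_mul]
    _ ≤ ∑ i ∈ Z, diam (X i) ^ t :=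
        Finset.sum_le_sum fun i hi => Real.rpow_le_rpow hc (hZ i hi).2 ht
    _ ≤ ∑ i ∈ Finset.univ.image List.ofFn, diam (X i) ^ t :=
        Finset.sum_le_sum_of_subset_of_nonneg hsub fun _ _ _ => Real.rpow_nonneg diam_nonneg t
    _ = presSum X t n := Finset.sum_image fun _ _ _ _ h => List.ofFn_injective h

theorem pre_succ_dropLast {ι : Type*} (j : ℕ → ι) (n : ℕ) :
    (pre j (n + 1)).dropLast = pre j n := by
  rw [pre, List.ofFn_succ', List.concat_eq_append, List.dropLast_concat]
  rfl

namespace WCMC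

variable {ι : Type*} [Fintype ι] (W : WCMC ι M)

theorem X_nonempty {i : List ι} (hi : i ≠ []) : (W.X i).Nonempty :=
  Set.nonempty_iff_ne_empty.2 fun h => (W.diam_pos i hi).ne' (by rw [h, diam_empty])

theorem X_subset_of_prefix {u w : List ι} (hu : u ≠ []) (h : u <+: w) : W.X w ⊆ W.X u := by
  obtain ⟨v, rfl⟩ := h
  induction v using List.reverseRecOn with
  | nil => simp
  | append_singleton v a ih =>
    refine (Set.Subset.trans ?_ ih)
    have hlen : 2 ≤ (u ++ (v ++ [a])).length := by
      have := List.length_pos_iff.2 hu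
      simp; omega
    simpa [← List.append_assoc] using W.nested _ hlen

theorem diam_le_of_prefix {u w : List ι} (hu : u ≠ []) (h : u <+: w) :
    diam (W.X w) ≤ diam (W.X u) :=
  diam_mono (W.X_subset_of_prefix hu h) (W.compact u hu).isBounded

theorem exists_diam_le_pow_s3 : ∃ (n₀ : ℕ) (θ : ℝ), 0 < n₀ ∧ 0 < θ ∧ θ < 1 ∧
    ∀ k (w : List ι), (k + 1) * n₀ ≤ w.length → diam (W.X w) ≤ θ ^ (k + 1) := by
  obtain ⟨n₀, hn₀, hsmall⟩ := W.small
  have hD : 0 < W.D := one_pos.trans_le W.one_le_D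
  obtain ⟨θ, hθ1, hθ0, hθ⟩ : ∃ θ < 1, 0 < θ ∧ ∀ v ∈ {v : List ι | v.length = n₀},
      W.D * diam (W.X v) < θ := by
    refine ((eventually_gt_nhds (one_pos : (0 : ℝ) < 1)).and
      ((eventually_all_finite (List.finite_length_eq ι n₀)).2 fun v hv => ?_)).exists_lt
    refine eventually_gt_nhds ?_
    calc W.D * diam (W.X v) < W.D * W.D⁻¹ := mul_lt_mul_of_pos_left (hsmall v hv) hD
      _ = 1 := mul_inv_cancel₀ hD.ne'
  have hne {w : List ι} (hw : n₀ ≤ w.length) : w.take n₀ ≠ [] :=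
    List.ne_nil_of_length_pos (by rw [List.length_take]; omega)
  have hblock : ∀ k (w : List ι), (k + 1) * n₀ ≤ w.length → W.D * diam (W.X w) ≤ θ ^ (k + 1) := by
    intro k
    induction k with
    | zero =>
      intro w hw
      rw [zero_add, one_mul] at hw
      calc W.D * diam (W.X w) ≤ W.D * diam (W.X (w.take n₀)) :=
            mul_le_mul_of_nonneg_left (W.diam_le_of_prefix (hne hw) (List.take_prefix _ _)) hD.le
        _ ≤ θ ^ (0 + 1) := by simpa using (hθ _ (by simp; omega)).le
    | succ k ih =>
      intro w hw
      have hw₁ : n₀ ≤ w.length := le_trans (by nlinarith) hw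
      have hw₂ : (k + 1) * n₀ ≤ (w.drop n₀).length := by
        have : (k + 1 + 1) * n₀ = (k + 1) * n₀ + n₀ := by ring
        rw [List.length_drop]
        omega
      have hdrop : w.drop n₀ ≠ [] :=
        List.ne_nil_of_length_pos ((Nat.mul_pos k.succ_pos hn₀).trans_le hw₂)
      have h₁ := (hθ _ (by simp; omega) : W.D * diam (W.X (w.take n₀)) < θ).le
      have h₂ := ih _ hw₂
      calc W.D * diam (W.X w) = W.D * diam (W.X (w.take n₀ ++ w.drop n₀)) := by
            rw [List.take_append_drop]
        _ ≤ W.D * (W.D * diam (W.X (w.take n₀)) * diam (W.X (w.drop n₀))) :=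
            mul_le_mul_of_nonneg_left (W.submult _ _ (hne hw₁) hdrop) hD.le
        _ = (W.D * diam (W.X (w.take n₀))) * (W.D * diam (W.X (w.drop n₀))) := by ring
        _ ≤ θ * θ ^ (k + 1) := by gcongr
        _ = θ ^ (k + 1 + 1) := by ring
  refine ⟨n₀, θ, hn₀, hθ0, hθ1, fun k w hw => ?_⟩
  exact (le_mul_of_one_le_left diam_nonneg W.one_le_D).trans (hblock k w hw)

theorem exists_length_le_of_mem_Zr : ∃ a b : ℝ, 0 < a ∧ 0 ≤ b ∧
    ∀ r, 0 < r → r < 1 → ∀ i ∈ Zr W.X r, (i.length : ℝ) ≤ a * -Real.log r + b := by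
  obtain ⟨n₀, θ, hn₀, hθ0, hθ1, hdecay⟩ := W.exists_diam_le_pow_s3
  have hℓ : 0 < -Real.log θ := neg_pos.2 (Real.log_neg hθ0 hθ1)
  have hn₀' : (0 : ℝ) < n₀ := Nat.cast_pos.2 hn₀
  refine ⟨n₀ / -Real.log θ, n₀, div_pos hn₀' hℓ, hn₀'.le, fun r hr0 hr1 i hi => ?_⟩
  have hu : 0 < -Real.log r := neg_pos.2 (Real.log_neg hr0 hr1)
  obtain ⟨-, -, hlen | hpar⟩ := hi
  · have : (0 : ℝ) ≤ n₀ / -Real.log θ * -Real.log r := by positivity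
    rw [hlen, Nat.cast_one]
    linarith [(Nat.one_le_cast.2 hn₀ : (1 : ℝ) ≤ n₀)]
  set k := i.dropLast.length / n₀
  have hθk : r < θ ^ k := by
    cases hk : k with
    | zero => rwa [pow_zero]
    | succ k => exact hpar.trans_le (hdecay _ _ (hk ▸ Nat.div_mul_le_self _ _))
  have hkℓ : (k : ℝ) ≤ -Real.log r / -Real.log θ := by
    rw [le_div_iff₀ hℓ]
    have := Real.log_lt_log hr0 hθk
    rw [Real.log_pow] at this
    linarith
  have hlen : i.length ≤ n₀ * (k + 1) := by
    have h₁ : i.dropLast.length < n₀ * (k + 1) := Nat.lt_mul_div_succ _ hn₀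
    have h₂ := i.length_dropLast
    omega
  calc (i.length : ℝ) ≤ n₀ * (k + 1) := by exact_mod_cast hlen
    _ ≤ n₀ * (-Real.log r / -Real.log θ + 1) := by gcongr
    _ = n₀ / -Real.log θ * -Real.log r + n₀ := by ring

theorem exists_mem_Zr {x : M} (hx : x ∈ limitSet W.X) {r : ℝ} (hr : 0 < r) :
    ∃ i ∈ Zr W.X r, x ∈ W.X i := by
  classical
  obtain ⟨j, hj⟩ := hx
  obtain ⟨n₀, θ, hn₀, hθ0, hθ1, hdecay⟩ := W.exists_diam_le_pow_s3
  have hex : ∃ n, diam (W.X (pre j (n + 1))) ≤ r := by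
    obtain ⟨k, hk⟩ := exists_pow_lt_of_lt_one hr hθ1
    refine ⟨(k + 1) * n₀ - 1, ?_⟩
    rw [Nat.sub_add_cancel (Nat.one_le_iff_ne_zero.2 (by positivity))]
    calc diam (W.X (pre j ((k + 1) * n₀))) ≤ θ ^ (k + 1) := hdecay k _ (by simp [pre])
      _ ≤ θ ^ k := pow_le_pow_of_le_one hθ0.le hθ1.le (Nat.le_succ k)
      _ ≤ r := hk.le
  refine ⟨pre j (Nat.find hex + 1), ⟨?_, Nat.find_spec hex, ?_⟩, hj _ (Nat.succ_pos _)⟩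
  · simp [pre]
  · cases h : Nat.find hex with
    | zero => simp [pre]
    | succ m =>
      right
      rw [pre_succ_dropLast]
      exact not_le.1 (Nat.find_min hex (h ▸ Nat.lt_succ_self m))

theorem le_mul_diam_of_mem_Zr {r : ℝ} (hr : ∀ a, r < diam (W.X [a])) {i : List ι}
    (hi : i ∈ Zr W.X r) : r ≤ W.D * diam (W.X i) := by
  obtain ⟨hne, hle, hpar⟩ := hi
  have h2 : 2 ≤ i.length := by
    by_contra h
    have := List.length_pos_iff.2 hne
    obtain ⟨a, rfl⟩ := List.length_eq_one_iff.1 (show i.length = 1 by omega)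
    exact (hle.trans_lt (hr a)).false
  have hD : 0 < W.D := one_pos.trans_le W.one_le_D
  calc r ≤ diam (W.X i.dropLast) := (hpar.resolve_left (by omega)).le
    _ = W.D * (W.D⁻¹ * diam (W.X i.dropLast)) := by field_simp
    _ ≤ W.D * diam (W.X i) := mul_le_mul_of_nonneg_left (W.lower i h2) hD.le

theorem coverNum_two_mul_mul_rpow_le {t r : ℝ} (ht : 0 ≤ t) (hr : 0 < r)
    (hra : ∀ a, r < diam (W.X [a])) {L : ℕ} (hL : ∀ i ∈ Zr W.X r, i.length ≤ L) :
    (coverNum (limitSet W.X) (2 * r) : ℝ) * (r / W.D) ^ t ≤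
      ∑ n ∈ Finset.range (L + 1), presSum W.X t n := by
  classical
  have hfin : (Zr W.X r).Finite := (List.finite_length_le ι L).subset hL
  have hcover : coverNum (limitSet W.X) (2 * r) ≤ hfin.toFinset.card := by
    refine coverNum_le_card _ W.X (fun i hi => ?_) (fun x hx => ?_)
    · obtain ⟨hne, hle, -⟩ := hfin.mem_toFinset.1 hi
      obtain ⟨y, hy⟩ := W.X_nonempty hne
      refine ⟨y, fun z hz => mem_ball.2 ?_⟩
      have := dist_le_diam_of_mem (W.compact i hne).isBounded hz hy
      linarith
    · obtain ⟨i, hi, hxi⟩ := W.exists_mem_Zr hx hr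
      exact mem_iUnion₂.2 ⟨i, hfin.mem_toFinset.2 hi, hxi⟩
  have hD : 0 < W.D := one_pos.trans_le W.one_le_D
  have hlen : ∀ i ∈ hfin.toFinset, i.length ∈ Finset.range (L + 1) := fun i hi =>
    Finset.mem_range.2 (Nat.lt_succ_of_le (hL i (hfin.mem_toFinset.1 hi)))
  calc (coverNum (limitSet W.X) (2 * r) : ℝ) * (r / W.D) ^ t
      ≤ hfin.toFinset.card * (r / W.D) ^ t := by gcongr
    _ = ∑ n ∈ Finset.range (L + 1),
          ((hfin.toFinset.filter fun i => i.length = n).card : ℝ) * (r / W.D) ^ t := by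
        rw [Finset.card_eq_sum_card_fiberwise hlen, Nat.cast_sum, Finset.sum_mul]
    _ ≤ ∑ n ∈ Finset.range (L + 1), presSum W.X t n := by
        refine Finset.sum_le_sum fun n _ => card_mul_rpow_le_presSum (by positivity) ht ?_
        intro i hi
        obtain ⟨hiZ, rfl⟩ := Finset.mem_filter.1 hi
        exact ⟨rfl, (div_le_iff₀' hD).2 (W.le_mul_diam_of_mem_Zr hra (hfin.mem_toFinset.1 hiZ))⟩

theorem coverNum_two_mul_le_rpow {P : ℝ → ℝ} (hP : IsPressure W.X P) {t s : ℝ} (ht : 0 ≤ t)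
    (hPt : P t ≤ 0) (hts : t < s) : ∃ C, ∀ ρ, 0 < ρ → ρ < 1 → (∀ i, ρ < diam (W.X [i])) →
      (coverNum (limitSet W.X) (2 * ρ) : ℝ) ≤ C * ρ ^ (-s) := by
  obtain ⟨a, b, ha, hb, hlen⟩ := W.exists_length_le_of_mem_Zr
  -- words of `Z(ρ)` have length at most `a log (1/ρ) + b`, so a growth factor
  -- `exp (ε · length)` costs only a constant times `ρ^{-(s-t)}`
  set ε := (s - t) / a with hε_def
  have hε : 0 < ε := div_pos (by linarith) ha
  obtain ⟨A, hA⟩ := exists_sum_range_le_mul_exp (hP t ht) (hPt.trans_lt hε) hε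
  have hA0 : 0 ≤ A := by simpa using hA 0
  have hD : 0 < W.D := one_pos.trans_le W.one_le_D
  refine ⟨W.D ^ t * A * Real.exp (ε * (b + 1)), fun ρ hρ hρ1 hρa => ?_⟩
  set L := ⌊a * -Real.log ρ + b⌋₊
  have hu : 0 < -Real.log ρ := neg_pos.2 (Real.log_neg hρ hρ1)
  have hL : (L : ℝ) ≤ a * -Real.log ρ + b := Nat.floor_le (by positivity)
  have hbound : (coverNum (limitSet W.X) (2 * ρ) : ℝ) * (ρ / W.D) ^ t ≤
      A * Real.exp (ε * (a * -Real.log ρ + b + 1)) := by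
    refine (W.coverNum_two_mul_mul_rpow_le ht hρ hρa (L := L)
      fun i hi => Nat.le_floor (hlen _ hρ hρ1 i hi)).trans ((hA (L + 1)).trans ?_)
    gcongr
    push_cast
    linarith
  rw [← le_div_iff₀ (by positivity)] at hbound
  refine hbound.trans_eq ?_
  have hεa : ε * a = s - t := by rw [hε_def]; field_simp
  rw [Real.div_rpow hρ.le hD.le]
  simp only [Real.rpow_def_of_pos hρ, Real.rpow_def_of_pos hD, div_eq_mul_inv, ← Real.exp_neg,
    mul_assoc, ← Real.exp_add]
  rw [mul_left_comm, ← Real.exp_add]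
  congr 2
  linear_combination -Real.log ρ * hεa

theorem coverNum_limitSet_le_rpow {P : ℝ → ℝ} (hP : IsPressure W.X P) {t s : ℝ} (ht : 0 ≤ t)
    (hPt : P t ≤ 0) (hts : t < s) :
    ∃ C, ∀ᶠ r in 𝓝[>] 0, (coverNum (limitSet W.X) r : ℝ) ≤ C * r ^ (-s) := by
  obtain ⟨C, hC⟩ := W.coverNum_two_mul_le_rpow hP ht hPt hts
  have hsmall : ∀ᶠ ρ in 𝓝 (0 : ℝ), ρ < 1 ∧ ∀ i, ρ < diam (W.X [i]) :=
    (eventually_lt_nhds one_pos).and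
      (eventually_all.2 fun i => eventually_lt_nhds (W.diam_pos [i] (List.cons_ne_nil _ _)))
  have hhalf : Tendsto (fun r : ℝ => r / 2) (𝓝[>] 0) (𝓝 0) :=
    ((continuous_id.div_const 2).tendsto' 0 0 (by simp)).mono_left nhdsWithin_le_nhds
  refine ⟨2 ^ s * C, ?_⟩
  filter_upwards [hhalf.eventually hsmall, self_mem_nhdsWithin] with r ⟨hρ1, hρa⟩ hr
  have hr : 0 < r := hr
  have h := hC (r / 2) (half_pos hr) hρ1 hρa
  rw [mul_div_cancel₀ r two_ne_zero] at h
  refine h.trans_eq ?_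
  rw [Real.div_rpow hr.le zero_le_two, Real.rpow_neg zero_le_two]
  field_simp

end WCMC

end Moran

theorem stmt3_general {ι M : Type*} [Fintype ι] [MetricSpace M]
    (W : Moran.WCMC ι M)
    (P : ℝ → ℝ) (hP : Moran.IsPressure W.X P)
    (t : ℝ) (ht : 0 ≤ t) (hPt : P t ≤ 0) :
    Moran.upMink (Moran.limitSet W.X) ≤ (t : EReal) :=
  Moran.upMink_le_of_coverNum_le_rpow ht fun _ hs => W.coverNum_limitSet_le_rpow hP ht hPt hs

/-- If the topological pressure of a WCMC satisfies `P(t) ≤ 0` for a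
given `t ≥ 0`, then the upper Minkowski dimension of the limit set `E` satisfies
`dim_M(E) ≤ t`. -/
theorem stmt3 {ι M : Type*} [Fintype ι] [MetricSpace M]
    (hcard : 2 ≤ Fintype.card ι) (W : Moran.WCMC ι M)
    (P : ℝ → ℝ) (hP : Moran.IsPressure W.X P)
    (t : ℝ) (ht : 0 ≤ t) (hPt : P t ≤ 0) :
    Moran.upMink (Moran.limitSet W.X) ≤ (t : EReal) :=
  stmt3_general W P hP t ht hPt
end

section
/- Suppose we have a weakly controlled Moran construction in M and let c, r_0 > 0 and α_1 > 0 be constants. Assume that for every x ∈ M, every 0 < r < R < r_0, and every maximal r-packing {B(y,r) : y ∈ H} of B(x,R) we have #H < c·(R/r)^{α_1}. Then the ball condition implies the finite clustering property. -/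
open Metric Set Filter MeasureTheory Topology
open scoped ENNReal ENat

/-!
For small `r`, the ball-condition centres of the words in `Z(x,r)` are distinct points of
`B(x,3r)` whose `δr`-balls are disjoint. Extending them by Zorn's lemma to a maximal
`δr`-packing of `B(x,3r)`, the packing hypothesis bounds `#Z(x,r)` by `c (3/δ)^α₁`,
uniformly in `x` and `r`.
-/

open Bornology

section Packing

variable {M : Type*} [MetricSpace M]

theorem Set.PairwiseDisjoint.injOn_of_balls {ι : Type*} {Z : Set ι} {c : ι → M} {ρ : ℝ}
    (hρ : 0 < ρ) (hZ : Z.PairwiseDisjoint fun i => ball (c i) ρ) : InjOn c Z := by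
  intro i hi j hj hij
  refine hZ.elim hi hj (not_disjoint_iff.2 ⟨c j, ?_, mem_ball_self hρ⟩)
  rw [hij]
  exact mem_ball_self hρ

theorem exists_maximal_packing_superset {A H₀ : Set M} {ρ : ℝ} (hρ : 0 < ρ) (hH₀A : H₀ ⊆ A)
    (hH₀ : H₀.PairwiseDisjoint (ball · ρ)) :
    ∃ H, H₀ ⊆ H ∧ H ⊆ A ∧ H.PairwiseDisjoint (ball · ρ) ∧ A ⊆ ⋃ y ∈ H, ball y (2 * ρ) := by
  let S : Set (Set M) := {H | H ⊆ A ∧ H.PairwiseDisjoint (ball · ρ)}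
  have hchain : ∀ C ⊆ S, IsChain (· ⊆ ·) C → C.Nonempty → ∃ ub ∈ S, ∀ s ∈ C, s ⊆ ub :=
    fun C hCS hC _ => ⟨⋃₀ C, ⟨sUnion_subset fun s hs => (hCS hs).1,
      (hC.pairwiseDisjoint_sUnion _).2 fun s hs => (hCS hs).2⟩, fun _ => subset_sUnion_of_mem⟩
  obtain ⟨H, hH₀H, ⟨hHA, hH⟩, hmax⟩ := zorn_subset_nonempty S hchain H₀ ⟨hH₀A, hH₀⟩
  refine ⟨H, hH₀H, hHA, hH, fun y hy => ?_⟩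
  by_contra hcov
  have hfar : ∀ z ∈ H, 2 * ρ ≤ dist y z := fun z hz =>
    not_lt.1 fun h => hcov (mem_biUnion hz (mem_ball.2 h))
  have hyH : y ∉ H := fun h => by linarith [hfar y h, dist_self y]
  have hins : insert y H ∈ S := ⟨insert_subset hy hHA,
    hH.insert fun z hz _ => ball_disjoint_ball (by linarith [hfar z hz])⟩
  exact hyH (hmax hins (subset_insert y H) (mem_insert y H))

theorem dist_lt_of_infDist_lt_of_diam_le {s : Set M} {x y : M} {a b e : ℝ} (hs : IsBounded s)
    (hy : infDist y s < a) (hdiam : diam s ≤ b) (hsx : (s ∩ ball x e).Nonempty) :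
    dist y x < a + b + e := by
  obtain ⟨q, hqs, hqx⟩ := hsx
  obtain ⟨p, hps, hyp⟩ := (infDist_lt_iff ⟨q, hqs⟩).1 hy
  calc dist y x ≤ dist y p + dist p q + dist q x := dist_triangle4 _ _ _ _
    _ < a + b + e := by
      linarith [dist_le_diam_of_mem hs hps hqs, mem_ball.1 hqx]

end Packing

theorem ENat.le_ceil_of_toENNReal_lt_ofReal {n : ℕ∞} {a : ℝ}
    (h : (n : ℝ≥0∞) < ENNReal.ofReal a) : n ≤ ⌈a⌉₊ := by
  rw [← ENat.toENNReal_le]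
  calc (n : ℝ≥0∞) ≤ ENNReal.ofReal a := h.le
    _ ≤ ENNReal.ofReal ⌈a⌉₊ := ENNReal.ofReal_le_ofReal (Nat.le_ceil a)
    _ = _ := by simp

namespace Moran

variable {ι M : Type*} [MetricSpace M] {X : List ι → Set M}

theorem fcp_of_eventually_encard_Zx_le (K : ℕ)
    (h : ∀ x ∈ limitSet X, ∀ᶠ r in 𝓝[>] 0, (Zx X x r).encard ≤ K) : FCP X :=
  ⟨K, fun x hx => limsup_le_of_le (by isBoundedDefault) (h x hx)⟩

theorem exists_maximal_packing_encard_Zx_le (hX : ∀ i, i ≠ [] → IsBounded (X i)) {x : M}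
    {r δ : ℝ} (hr : 0 < r) (hδ : 0 < δ) (cen : List ι → M)
    (hcen : ∀ i ∈ Zx X x r, infDist (cen i) (X i) < r)
    (hdisj : (Zx X x r).PairwiseDisjoint fun i => ball (cen i) (δ * r)) :
    ∃ H ⊆ ball x (3 * r), H.PairwiseDisjoint (ball · (δ * r)) ∧
      ball x (3 * r) ⊆ ⋃ y ∈ H, ball y (2 * (δ * r)) ∧ (Zx X x r).encard ≤ H.encard := by
  have hδr : 0 < δ * r := mul_pos hδ hr
  have hcen_mem : cen '' Zx X x r ⊆ ball x (3 * r) := by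
    rintro _ ⟨i, hi, rfl⟩
    have := dist_lt_of_infDist_lt_of_diam_le (hX i hi.1.1) (hcen i hi) hi.1.2.1 hi.2
    exact mem_ball.2 (by linarith)
  have hinj := hdisj.injOn_of_balls hδr
  obtain ⟨H, hZH, hHsub, hH, hcov⟩ :=
    exists_maximal_packing_superset hδr hcen_mem (hinj.pairwiseDisjoint_image.2 hdisj)
  exact ⟨H, hHsub, hH, hcov, hinj.encard_image ▸ encard_le_encard hZH⟩

theorem BallCond.eventually_exists_maximal_packing (hX : ∀ i, i ≠ [] → IsBounded (X i))
    (hB : BallCond X) : ∃ δ, 0 < δ ∧ δ < 1 ∧ ∀ x ∈ limitSet X, ∀ᶠ r in 𝓝[>] 0,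
      ∃ H ⊆ ball x (3 * r), H.PairwiseDisjoint (ball · (δ * r)) ∧
        ball x (3 * r) ⊆ ⋃ y ∈ H, ball y (2 * (δ * r)) ∧ (Zx X x r).encard ≤ H.encard := by
  obtain ⟨δ, hδ, hδ1, hball⟩ := hB
  refine ⟨δ, hδ, hδ1, fun x hx => ?_⟩
  obtain ⟨rx, hrx, hcond⟩ := hball x hx
  filter_upwards [Ioo_mem_nhdsGT hrx] with r ⟨hr, hrrx⟩
  obtain ⟨cen, hcen, hdisj⟩ := hcond r hr hrrx
  exact exists_maximal_packing_encard_Zx_le hX hr hδ cen hcen hdisj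

end Moran

theorem stmt8_general {ι M : Type*} [Fintype ι] [MetricSpace M]
    (W : Moran.WCMC ι M)
    (c r₀ α₁ : ℝ) (hr₀ : 0 < r₀)
    (hpack : ∀ (x : M) (r R : ℝ), 0 < r → r < R → R < r₀ →
      ∀ H : Set M, H ⊆ Metric.ball x R →
        (H.Pairwise fun y z => Disjoint (Metric.ball y r) (Metric.ball z r)) →
        Metric.ball x R ⊆ ⋃ y ∈ H, Metric.ball y (2 * r) →
        (H.encard : ℝ≥0∞) < ENNReal.ofReal (c * (R / r) ^ α₁)) :
    Moran.BallCond W.X → Moran.FCP W.X := by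
  intro hB
  obtain ⟨δ, hδ, hδ1, hev⟩ :=
    hB.eventually_exists_maximal_packing fun i hi => (W.compact i hi).isBounded
  refine Moran.fcp_of_eventually_encard_Zx_le ⌈c * (3 / δ) ^ α₁⌉₊ fun x hx => ?_
  filter_upwards [hev x hx, Ioo_mem_nhdsGT (by positivity : (0 : ℝ) < r₀ / 3)]
    with r ⟨H, hHsub, hH, hcov, hZH⟩ ⟨hr, hrr₀⟩
  have hbound := hpack x (δ * r) (3 * r) (by positivity) (by nlinarith) (by linarith)
    H hHsub hH hcov
  rw [mul_div_mul_right _ _ hr.ne'] at hbound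
  exact hZH.trans (ENat.le_ceil_of_toENNReal_lt_ofReal hbound)

/-- If every maximal `r`-packing of a ball `B(x,R)` (for
`0 < r < R < r₀`) has cardinality less than `c·(R/r)^{α₁}`, then for a WCMC in `M`
the ball condition implies the finite clustering property. -/
theorem stmt8 {ι M : Type*} [Fintype ι] [MetricSpace M]
    (hcard : 2 ≤ Fintype.card ι) (W : Moran.WCMC ι M)
    (c r₀ α₁ : ℝ) (hc : 0 < c) (hr₀ : 0 < r₀) (hα₁ : 0 < α₁)
    (hpack : ∀ (x : M) (r R : ℝ), 0 < r → r < R → R < r₀ →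
      ∀ H : Set M, H ⊆ Metric.ball x R →
        (H.Pairwise fun y z => Disjoint (Metric.ball y r) (Metric.ball z r)) →
        Metric.ball x R ⊆ ⋃ y ∈ H, Metric.ball y (2 * r) →
        (H.encard : ℝ≥0∞) < ENNReal.ofReal (c * (R / r) ^ α₁)) :
    Moran.BallCond W.X → Moran.FCP W.X :=
  stmt8_general W c r₀ α₁ hr₀ hpack
end

section
/- Suppose we have a weakly controlled Moran construction in M and let c, r_0 > 0 and α_2 > 0 be constants. Assume that for every x ∈ M, every 0 < r < R < r_0, and every maximal r-packing {B(y,r) : y ∈ H} of B(x,R) we have #H > c^{-1}·(R/r)^{α_2}. Then the finite clustering property implies the ball condition. -/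
open Metric Set Filter MeasureTheory Topology
open scoped ENNReal ENat

/-! Fix `K` bounding `#Z(x,r)` for small `r` and let `ρ = r / (2(t+1))` with `t` so large that
`c⁻¹ t^α₂ ≥ K`. Take a maximal `ρ`-packing `H` of `B(x,2r)`. For `z ∈ B(x,r)`, a maximal
`2ρ`-packing of `B(z, 2ρt)` has more than `K` points by the packing hypothesis, and distinct
points of it are `2ρ`-close to distinct points of `H`, so more than `K` points of `H` lie within
`r` of `z`. Every `X_i`, `i ∈ Z(x,r)`, meets `B(x,r)`, so Hall's theorem picks distinct points of
`H` close to the `X_i`, and their `ρ`-balls are disjoint. -/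

theorem Set.Finite.exists_injOn_mem_of_encard_le {ι α : Type*} [Nonempty α] {Z : Set ι}
    (hZ : Z.Finite) {S : ι → Set α} (hS : ∀ i ∈ Z, Z.encard ≤ (S i).encard) :
    ∃ f : ι → α, (∀ i ∈ Z, f i ∈ S i) ∧ InjOn f Z := by
  classical
  -- trimming each `S i` to exactly `#Z` points makes Hall's condition immediate
  have hT : ∀ i : Z, ∃ T : Finset α, ↑T ⊆ S i ∧ T.card = Z.ncard := fun i => by
    obtain ⟨T, hTS, hTcard⟩ := exists_subset_encard_eq (hS i i.2)
    have hTfin : T.Finite := by rw [← encard_ne_top_iff, hTcard]; exact hZ.encard_lt_top.ne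
    refine ⟨hTfin.toFinset, by simpa using hTS, ?_⟩
    rw [← ncard_eq_toFinset_card T hTfin]
    simp only [ncard_def, hTcard]
  choose T hTS hTcard using hT
  have := hZ.fintype
  have hHall : ∀ s : Finset Z, s.card ≤ (s.biUnion T).card := fun s => by
    rcases s.eq_empty_or_nonempty with rfl | ⟨i, hi⟩
    · simp
    calc s.card ≤ Fintype.card Z := s.card_le_univ
      _ = (T i).card := by rw [hTcard, ← Nat.card_eq_fintype_card, Nat.card_coe_set_eq]
      _ ≤ (s.biUnion T).card := Finset.card_le_card (Finset.subset_biUnion_of_mem T hi)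
  obtain ⟨f, hfinj, hfT⟩ := (Finset.all_card_le_biUnion_card_iff_exists_injective T).1 hHall
  refine ⟨fun i => if hi : i ∈ Z then f ⟨i, hi⟩ else Classical.arbitrary α,
    fun i hi => ?_, fun i hi j hj hij => ?_⟩
  · simpa [hi] using hTS _ (hfT ⟨i, hi⟩)
  · exact congrArg Subtype.val (hfinj (by simpa [hi, hj] using hij))

theorem ENat.eventually_le_of_limsup_le {α : Type*} {l : Filter α} {u : α → ℕ∞} {K : ℕ}
    (h : limsup u l ≤ K) : ∀ᶠ a in l, u a ≤ K := by
  have hlt : limsup u l < K + 1 := h.trans_lt ((ENat.lt_add_one_iff (by simp)).2 le_rfl)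
  filter_upwards [eventually_lt_of_limsup_lt hlt] with a ha
  exact (ENat.lt_add_one_iff (by simp)).1 ha

section Packing

variable {M : Type*} [MetricSpace M]

def IsMaximalPacking (A : Set M) (r : ℝ) (H : Set M) : Prop :=
  H ⊆ A ∧ H.Pairwise (fun y z => Disjoint (ball y r) (ball z r)) ∧
    A ⊆ ⋃ y ∈ H, ball y (2 * r)

theorem exists_isMaximalPacking (A : Set M) {r : ℝ} (hr : 0 < r) :
    ∃ H, IsMaximalPacking A r H := by
  obtain ⟨H, ⟨hHA, hH⟩, hmax⟩ := zorn_subset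
    {H | H ⊆ A ∧ H.Pairwise fun y z => Disjoint (ball y r) (ball z r)} fun C hC hchain =>
      ⟨⋃₀ C, ⟨sUnion_subset fun H hH => (hC hH).1,
        hchain.pairwise_sUnion.2 fun H hH => (hC hH).2⟩, fun _ => subset_sUnion_of_mem⟩
  refine ⟨H, hHA, hH, fun w hw => ?_⟩
  -- a point not covered by the `2r`-balls could be added to `H`
  by_contra hcov
  have hfar : ∀ y ∈ H, 2 * r ≤ dist w y := fun y hy =>
    not_lt.1 fun hlt => hcov (mem_biUnion hy (mem_ball.2 hlt))
  have hwH : w ∉ H := fun hwH => by linarith [hfar w hwH, dist_self w]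
  refine hwH (hmax ⟨insert_subset hw hHA, hH.insert fun y hy _ => ?_⟩ (subset_insert w H)
    (mem_insert w H))
  have h := ball_disjoint_ball (x := w) (y := y) (δ := r) (ε := r) (by linarith [hfar y hy])
  exact ⟨h, h.symm⟩

theorem encard_le_of_pairwise_disjoint_ball {Q S : Set M} {ρ : ℝ}
    (hQ : Q.Pairwise fun y z => Disjoint (ball y ρ) (ball z ρ))
    (hcov : Q ⊆ ⋃ y ∈ S, ball y ρ) : Q.encard ≤ S.encard := by
  have hnear : ∀ q ∈ Q, ∃ y ∈ S, dist y q < ρ := fun q hq => by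
    obtain ⟨y, hy, hqy⟩ := mem_iUnion₂.1 (hcov hq)
    exact ⟨y, hy, by rwa [dist_comm, ← mem_ball]⟩
  choose! F hFS hFq using hnear
  refine encard_le_encard_of_injOn (fun q hq => hFS q hq) fun q hq q' hq' hF => ?_
  by_contra hne
  exact disjoint_left.1 (hQ hq hq' hne) (mem_ball.2 (hFq q hq))
    (mem_ball.2 (hF ▸ hFq q' hq'))

variable (M) in
def PackingLowerBound (c r₀ α : ℝ) : Prop :=
  ∀ (x : M) (r R : ℝ), 0 < r → r < R → R < r₀ → ∀ H : Set M,
    IsMaximalPacking (ball x R) r H → ENNReal.ofReal (c⁻¹ * (R / r) ^ α) < H.encard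

theorem PackingLowerBound.natCast_lt_encard_near {c r₀ α t : ℝ} {K : ℕ}
    (hpack : PackingLowerBound M c r₀ α) (ht : 1 < t) (hKt : (K : ℝ) ≤ c⁻¹ * t ^ α)
    {x z : M} {r : ℝ} (hr : 0 < r) (hrr₀ : r < r₀) {H : Set M}
    (hH : IsMaximalPacking (ball x (2 * r)) (r / (2 * (t + 1))) H) (hz : z ∈ ball x r) :
    (K : ℕ∞) < {y ∈ H | dist y z < r}.encard := by
  set ρ := r / (2 * (t + 1)) with hρ
  have hρpos : 0 < ρ := by positivity
  have hρr : 2 * ρ * (t + 1) = r := by rw [hρ]; field_simp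
  obtain ⟨Q, hQ⟩ := exists_isMaximalPacking (ball z (2 * ρ * t)) (by positivity : 0 < 2 * ρ)
  have hQbig := hpack z (2 * ρ) (2 * ρ * t) (by positivity) (by nlinarith) (by nlinarith) Q hQ
  rw [mul_div_cancel_left₀ t (by positivity : 2 * ρ ≠ 0)] at hQbig
  have hKQ : (K : ℕ∞) < Q.encard := by
    have hK : ((K : ℕ∞) : ℝ≥0∞) ≤ ENNReal.ofReal (c⁻¹ * t ^ α) := by
      simpa using ENNReal.ofReal_le_ofReal hKt
    exact_mod_cast hK.trans_lt hQbig
  refine hKQ.trans_le (encard_le_of_pairwise_disjoint_ball hQ.2.1 fun q hq => ?_)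
  have hqz : dist q z < 2 * ρ * t := mem_ball.1 (hQ.1 hq)
  have hqx : q ∈ ball x (2 * r) := mem_ball.2 (by linarith [dist_triangle q z x, mem_ball.1 hz])
  obtain ⟨y, hy, hqy⟩ := mem_iUnion₂.1 (hH.2.2 hqx)
  refine mem_iUnion₂.2 ⟨y, ⟨hy, ?_⟩, hqy⟩
  linarith [dist_triangle y q z, mem_ball'.1 hqy]

theorem exists_pairwise_disjoint_balls_near {ι : Type*} {X : ι → Set M} {Z : Set ι}
    {H : Set M} {x : M} {r ρ : ℝ} {K : ℕ} (hZ : Z.encard ≤ K)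
    (hmeet : ∀ i ∈ Z, (X i ∩ ball x r).Nonempty)
    (hH : H.Pairwise fun y z => Disjoint (ball y ρ) (ball z ρ))
    (hnear : ∀ z ∈ ball x r, (K : ℕ∞) < {y ∈ H | dist y z < r}.encard) :
    ∃ c : ι → M, (∀ i ∈ Z, infDist (c i) (X i) < r) ∧
      Z.Pairwise fun i j => Disjoint (ball (c i) ρ) (ball (c j) ρ) := by
  have : Nonempty M := ⟨x⟩
  choose! z hzX hzx using hmeet
  obtain ⟨c, hcH, hcinj⟩ := (finite_of_encard_le_coe hZ).exists_injOn_mem_of_encard_le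
    (S := fun i => {y ∈ H | dist y (z i) < r}) fun i hi => hZ.trans (hnear _ (hzx i hi)).le
  exact ⟨c, fun i hi => (infDist_le_dist_of_mem (hzX i hi)).trans_lt (hcH i hi).2,
    fun i hi j hj hij => hH (hcH i hi).1 (hcH j hj).1 fun h => hij (hcinj hi hj h)⟩

end Packing

theorem stmt9_general {ι M : Type*} [Fintype ι] [MetricSpace M]
    (W : Moran.WCMC ι M)
    (c r₀ α₂ : ℝ) (hc : 0 < c) (hr₀ : 0 < r₀) (hα₂ : 0 < α₂)
    (hpack : ∀ (x : M) (r R : ℝ), 0 < r → r < R → R < r₀ →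
      ∀ H : Set M, H ⊆ Metric.ball x R →
        (H.Pairwise fun y z => Disjoint (Metric.ball y r) (Metric.ball z r)) →
        Metric.ball x R ⊆ ⋃ y ∈ H, Metric.ball y (2 * r) →
        ENNReal.ofReal (c⁻¹ * (R / r) ^ α₂) < (H.encard : ℝ≥0∞)) :
    Moran.FCP W.X → Moran.BallCond W.X := by
  rintro ⟨K, hK⟩
  have hpack' : PackingLowerBound M c r₀ α₂ := fun x r R hr hrR hR H hH =>
    hpack x r R hr hrR hR H hH.1 hH.2.1 hH.2.2
  obtain ⟨t, ht, hKt⟩ := ((eventually_gt_atTop 1).and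
    (((tendsto_rpow_atTop hα₂).const_mul_atTop (inv_pos.2 hc)).eventually_ge_atTop K)).exists
  refine ⟨1 / (2 * (t + 1)), by positivity, by rw [div_lt_one (by positivity)]; linarith,
    fun x hx => ?_⟩
  obtain ⟨ε, hε, hZ⟩ := (nhdsGT_basis (0 : ℝ)).eventually_iff.1
    (ENat.eventually_le_of_limsup_le (hK x hx))
  refine ⟨min ε r₀, lt_min hε hr₀, fun r hr hrε => ?_⟩
  obtain ⟨H, hH⟩ :=
    exists_isMaximalPacking (ball x (2 * r)) (by positivity : 0 < r / (2 * (t + 1)))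
  rw [one_div_mul_eq_div]
  exact exists_pairwise_disjoint_balls_near (hZ ⟨hr, hrε.trans_le (min_le_left _ _)⟩)
    (fun i hi => hi.2) hH.2.1 fun z hz =>
      hpack'.natCast_lt_encard_near ht hKt hr (hrε.trans_le (min_le_right _ _)) hH hz

/-- If every maximal `r`-packing of a ball `B(x,R)` (for
`0 < r < R < r₀`) has cardinality greater than `c⁻¹·(R/r)^{α₂}`, then for a WCMC
in `M` the finite clustering property implies the ball condition. -/
theorem stmt9 {ι M : Type*} [Fintype ι] [MetricSpace M]
    (hcard : 2 ≤ Fintype.card ι) (W : Moran.WCMC ι M)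
    (c r₀ α₂ : ℝ) (hc : 0 < c) (hr₀ : 0 < r₀) (hα₂ : 0 < α₂)
    (hpack : ∀ (x : M) (r R : ℝ), 0 < r → r < R → R < r₀ →
      ∀ H : Set M, H ⊆ Metric.ball x R →
        (H.Pairwise fun y z => Disjoint (Metric.ball y r) (Metric.ball z r)) →
        Metric.ball x R ⊆ ⋃ y ∈ H, Metric.ball y (2 * r) →
        ENNReal.ofReal (c⁻¹ * (R / r) ^ α₂) < (H.encard : ℝ≥0∞)) :
    Moran.FCP W.X → Moran.BallCond W.X :=
  stmt9_general W c r₀ α₂ hc hr₀ hα₂ hpack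
end

section
/- Let E be the invariant set of a semiconformal iterated function system {φ_i : i ∈ I} on a complete metric space. Then the collection {φ_i(E) : i ∈ I*} is a tractable controlled Moran construction. -/
open Metric Set Filter MeasureTheory Topology
open scoped ENNReal ENat

/-!
Each `φ_i` distorts distances by a factor between `s̲_i` and `s̄_i ≤ D s̲_i`. Applied to `E`
and to `φ_j(E)` this gives `diam φ_i(E) ≍ s̲_i diam E` and `diam φ_{ij}(E) ≍ s̲_i diam φ_j(E)`,
which together yield (C1); applied to two pieces at distance at most `r` it gives
`dist(φ_{hi}(E), φ_{hj}(E)) ≤ s̄_h r ≲ diam φ_h(E) · r`, i.e. tractability. Smallness (W2)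
comes from a common contraction ratio `σ < 1` of the finitely many generators.
-/

namespace Moran

section Metric

variable {α β : Type*} [MetricSpace α] [MetricSpace β]

lemma mul_diam_le_diam_image {f : α → β} {c : ℝ} (hc : 0 < c)
    (hf : ∀ x y, c * dist x y ≤ dist (f x) (f y)) {s : Set α} (hs : Bornology.IsBounded (f '' s)) :
    c * diam s ≤ diam (f '' s) := by
  rw [← le_div_iff₀' hc]
  refine diam_le_of_forall_dist_le (div_nonneg diam_nonneg hc.le) fun x hx y hy => ?_
  rw [le_div_iff₀' hc]
  exact (hf x y).trans (dist_le_diam_of_mem hs (mem_image_of_mem f hx) (mem_image_of_mem f hy))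

lemma iInf_infEDist_ne_top {s t : Set α} (hs : s.Nonempty) (ht : t.Nonempty) :
    ⨅ x ∈ s, infEDist x t ≠ ⊤ := by
  obtain ⟨a, ha⟩ := hs
  obtain ⟨b, hb⟩ := ht
  exact ne_top_of_le_ne_top (edist_ne_top a b)
    ((iInf₂_le a ha).trans (infEDist_le_edist_of_mem hb))

lemma setDist_image_le {K : NNReal} (hK : K ≠ 0) {f : α → β} (hf : LipschitzWith K f)
    {s t : Set α} (hs : s.Nonempty) (ht : t.Nonempty) :
    setDist (f '' s) (f '' t) ≤ K * setDist s t := by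
  have key : ⨅ x ∈ f '' s, infEDist x (f '' t) ≤ K * ⨅ x ∈ s, infEDist x t :=
    calc ⨅ x ∈ f '' s, infEDist x (f '' t)
        = ⨅ x ∈ s, ⨅ y ∈ t, edist (f x) (f y) := by
          simp only [infEDist, iInf_image]
      _ ≤ ⨅ x ∈ s, ⨅ y ∈ t, K * edist x y :=
          iInf₂_mono fun x _ => iInf₂_mono fun y _ => hf x y
      _ = K * ⨅ x ∈ s, infEDist x t := by
          simp only [infEDist,
            ENNReal.mul_iInf_of_ne (ENNReal.coe_ne_zero.2 hK) ENNReal.coe_ne_top]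
  unfold setDist
  rw [← ENNReal.coe_toReal K, ← ENNReal.toReal_mul]
  exact ENNReal.toReal_mono
    (ENNReal.mul_ne_top ENNReal.coe_ne_top (iInf_infEDist_ne_top hs ht)) key

end Metric

lemma comp_append {ι M : Type*} (φ : ι → M → M) (i j : List ι) :
    comp φ (i ++ j) = comp φ i ∘ comp φ j := by
  induction i with
  | nil => rfl
  | cons a l ih => simp only [List.cons_append, comp, ih, Function.comp_assoc]

lemma lipschitzWith_comp {ι M : Type*} [MetricSpace M] {φ : ι → M → M} {σ : NNReal}
    (hφ : ∀ a, LipschitzWith σ (φ a)) (i : List ι) : LipschitzWith (σ ^ i.length) (comp φ i) := by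
  induction i with
  | nil => exact LipschitzWith.id
  | cons a l ih =>
    rw [comp, List.length_cons, pow_succ']
    exact (hφ a).comp ih

namespace SCIFS

variable {ι M : Type*} [Fintype ι] [MetricSpace M] (S : SCIFS ι M)

lemma exists_lipschitzWith_lt_one : ∃ σ : NNReal, σ < 1 ∧ ∀ a, LipschitzWith σ (S.φ a) := by
  choose s hs0 hs1 hs using S.contr
  let σ : ι → NNReal := fun a => ⟨s a, hs0 a⟩
  refine ⟨Finset.univ.sup σ, Finset.sup_lt_iff zero_lt_one |>.2 fun a _ => hs1 a,
    fun a => ?_⟩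
  exact (LipschitzWith.of_dist_le_mul (hs a)).weaken (Finset.le_sup (f := σ) (Finset.mem_univ a))

lemma lipschitzWith_shi {i : List ι} (hi : i ≠ []) :
    LipschitzWith (S.shi i).toNNReal (comp S.φ i) :=
  LipschitzWith.of_dist_le' (S.upper i hi)

lemma shi_pos {i : List ι} (hi : i ≠ []) : 0 < S.shi i :=
  (S.slo_pos i hi).trans_le (S.slo_le_shi i hi)

lemma Xs_nil : S.Xs [] = S.E := image_id S.E

lemma Xs_append (i j : List ι) : S.Xs (i ++ j) = comp S.φ i '' S.Xs j := by
  rw [SCIFS.Xs, comp_append, image_comp]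
  rfl

lemma Xs_subset (i : List ι) : S.Xs i ⊆ S.E := by
  induction i with
  | nil => exact (Xs_nil S).subset
  | cons a l ih =>
    rw [← List.singleton_append, Xs_append, S.E_invariant]
    exact (image_mono ih).trans (subset_iUnion (fun a => S.φ a '' S.E) a)

lemma Xs_subset_Xs_dropLast {i : List ι} (hi : i ≠ []) : S.Xs i ⊆ S.Xs i.dropLast := by
  conv_lhs => rw [← List.dropLast_append_getLast hi, Xs_append]
  exact image_mono (Xs_subset S _)

lemma Xs_nonempty (i : List ι) : (S.Xs i).Nonempty := S.E_nonempty.image _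

lemma isCompact_Xs (i : List ι) : IsCompact (S.Xs i) := by
  obtain ⟨σ, -, hσ⟩ := S.exists_lipschitzWith_lt_one
  exact S.E_compact.image (lipschitzWith_comp hσ i).continuous

lemma diam_Xs_append_le {i : List ι} (hi : i ≠ []) (j : List ι) :
    diam (S.Xs (i ++ j)) ≤ S.shi i * diam (S.Xs j) := by
  rw [Xs_append, ← Real.coe_toNNReal _ (S.shi_pos hi).le]
  exact (S.lipschitzWith_shi hi).diam_image_le _ (S.isCompact_Xs j).isBounded

lemma slo_mul_diam_Xs_le {i : List ι} (hi : i ≠ []) (j : List ι) :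
    S.slo i * diam (S.Xs j) ≤ diam (S.Xs (i ++ j)) := by
  rw [Xs_append]
  refine mul_diam_le_diam_image (S.slo_pos i hi) (S.lower i hi) ?_
  rw [← Xs_append]
  exact (S.isCompact_Xs _).isBounded

lemma diam_Xs_pos {i : List ι} (hi : i ≠ []) : 0 < diam (S.Xs i) := by
  have h := S.slo_mul_diam_Xs_le hi []
  rw [List.append_nil, Xs_nil] at h
  exact (mul_pos (S.slo_pos i hi) S.diamE_pos).trans_le h

lemma shi_le_mul_diam_Xs {i : List ι} (hi : i ≠ []) :
    S.shi i ≤ S.D / diam S.E * diam (S.Xs i) := by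
  have h := S.slo_mul_diam_Xs_le hi []
  rw [List.append_nil, Xs_nil] at h
  calc S.shi i ≤ S.D * S.slo i := S.shi_le_D_slo i hi
    _ ≤ S.D * (diam (S.Xs i) / diam S.E) := by
        gcongr
        · linarith [S.one_le_D]
        · exact (le_div_iff₀ S.diamE_pos).2 h
    _ = S.D / diam S.E * diam (S.Xs i) := by ring

lemma diam_Xs_le_mul_slo {i : List ι} (hi : i ≠ []) :
    diam (S.Xs i) ≤ S.D * diam S.E * S.slo i := by
  have h := S.diam_Xs_append_le hi []
  rw [List.append_nil, Xs_nil] at h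
  calc diam (S.Xs i) ≤ S.shi i * diam S.E := h
    _ ≤ S.D * S.slo i * diam S.E := by
        gcongr
        exact S.shi_le_D_slo i hi
    _ = S.D * diam S.E * S.slo i := by ring

lemma diam_Xs_append_le_mul {i : List ι} (hi : i ≠ []) (j : List ι) :
    diam (S.Xs (i ++ j)) ≤ S.D / diam S.E * (diam (S.Xs i) * diam (S.Xs j)) := by
  calc diam (S.Xs (i ++ j)) ≤ S.shi i * diam (S.Xs j) := S.diam_Xs_append_le hi j
    _ ≤ S.D / diam S.E * diam (S.Xs i) * diam (S.Xs j) := by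
        gcongr
        exact S.shi_le_mul_diam_Xs hi
    _ = _ := by ring

lemma mul_diam_Xs_le_diam_Xs_append {i : List ι} (hi : i ≠ []) (j : List ι) :
    (S.D * diam S.E)⁻¹ * (diam (S.Xs i) * diam (S.Xs j)) ≤ diam (S.Xs (i ++ j)) := by
  have hDe : 0 < S.D * diam S.E := mul_pos (by linarith [S.one_le_D]) S.diamE_pos
  calc (S.D * diam S.E)⁻¹ * (diam (S.Xs i) * diam (S.Xs j))
      ≤ (S.D * diam S.E)⁻¹ * (S.D * diam S.E * S.slo i * diam (S.Xs j)) := by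
        gcongr
        exact S.diam_Xs_le_mul_slo hi
    _ = S.slo i * diam (S.Xs j) := by
        rw [mul_assoc (S.D * diam S.E), inv_mul_cancel_left₀ hDe.ne']
    _ ≤ diam (S.Xs (i ++ j)) := S.slo_mul_diam_Xs_le hi j

lemma exists_diam_Xs_lt {c : ℝ} (hc : 0 < c) :
    ∃ n : ℕ, 1 ≤ n ∧ ∀ i : List ι, i.length = n → diam (S.Xs i) < c := by
  obtain ⟨σ, hσ1, hσ⟩ := S.exists_lipschitzWith_lt_one
  have hlim : Tendsto (fun n : ℕ => (σ : ℝ) ^ n * diam S.E) atTop (𝓝 0) := by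
    simpa using (tendsto_pow_atTop_nhds_zero_of_lt_one σ.coe_nonneg hσ1).mul_const (diam S.E)
  obtain ⟨n, hn, hn1⟩ :=
    ((hlim.eventually (gt_mem_nhds hc)).and (eventually_ge_atTop 1)).exists
  refine ⟨n, hn1, fun i hi => lt_of_le_of_lt ?_ hn⟩
  have h := (lipschitzWith_comp hσ i).diam_image_le S.E S.E_compact.isBounded
  rw [hi, NNReal.coe_pow] at h
  exact h

noncomputable def toCMC : CMC ι M where
  X := S.Xs
  compact i _ := S.isCompact_Xs i
  diam_pos _ hi := S.diam_Xs_pos hi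
  D := max 1 (max (S.D / diam S.E) (S.D * diam S.E))
  one_le_D := le_max_left _ _
  nested i hi := S.Xs_subset_Xs_dropLast (List.ne_nil_of_length_pos (by omega))
  small := S.exists_diam_Xs_lt (inv_pos.2 (zero_lt_one.trans_le (le_max_left _ _)))
  controlled_le i j hi _ :=
    (S.diam_Xs_append_le_mul hi j).trans <| by
      gcongr
      exact (le_max_left _ _).trans (le_max_right _ _)
  controlled_ge i j hi _ := by
    refine le_trans ?_ (S.mul_diam_Xs_le_diam_Xs_append hi j)
    gcongr
    · exact mul_pos (by linarith [S.one_le_D]) S.diamE_pos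
    · exact (le_max_right _ _).trans (le_max_right _ _)

lemma tractable_Xs : Tractable S.Xs := by
  refine ⟨max 1 (S.D / diam S.E), le_max_left _ _, fun r _ h i j hh _ _ hij => ?_⟩
  rw [Xs_append, Xs_append]
  calc setDist (comp S.φ h '' S.Xs i) (comp S.φ h '' S.Xs j)
      ≤ S.shi h * setDist (S.Xs i) (S.Xs j) := by
        simpa [Real.coe_toNNReal _ (S.shi_pos hh).le] using
          setDist_image_le (by simpa using S.shi_pos hh) (S.lipschitzWith_shi hh)
            (S.Xs_nonempty i) (S.Xs_nonempty j)
    _ ≤ S.D / diam S.E * diam (S.Xs h) * r :=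
        mul_le_mul (S.shi_le_mul_diam_Xs hh) hij ENNReal.toReal_nonneg
          ((S.shi_pos hh).le.trans (S.shi_le_mul_diam_Xs hh))
    _ ≤ max 1 (S.D / diam S.E) * diam (S.Xs h) * r := by
        gcongr
        exact le_max_right _ _

end SCIFS

end Moran

theorem stmt12_general {ι M : Type*} [Fintype ι] [MetricSpace M] (S : Moran.SCIFS ι M) :
    (∃ C : Moran.CMC ι M, ∀ i : List ι, C.X i = S.Xs i) ∧
      Moran.Tractable S.Xs :=
  ⟨⟨S.toCMC, fun _ => rfl⟩, S.tractable_Xs⟩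

/-- For the invariant set `E` of a semiconformal IFS on a complete
metric space, the collection `{φ_i(E) : i ∈ I*}` is a tractable CMC. -/
theorem stmt12 {ι M : Type*} [Fintype ι] [MetricSpace M] [CompleteSpace M]
    (hcard : 2 ≤ Fintype.card ι) (S : Moran.SCIFS ι M) :
    (∃ C : Moran.CMC ι M, ∀ i : List ι, C.X i = S.Xs i) ∧
      Moran.Tractable S.Xs :=
  stmt12_general S
end
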